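/- arXiv:0806.3180 — 6 statements merged into one kernel-verified Lean document; each statement's English description precedes it below -/
import Mathlib

section
/- Let Λ1 and Λ2 be random measures on a locally compact second countable Hausdorff space E. If for every n and all pairwise DISJOINT bounded Borel sets I_1,…,I_n one has (Λ1(I_1),…,Λ1(I_n)) ≤_dcx (Λ2(I_1),…,Λ2(I_n)), then Λ1 ≤_dcx Λ2, i.e., the same inequality holds for all (not necessarily disjoint) finite families of bounded Borel sets. The same result holds for the idcx and idcv orders. -/
open MeasureTheory ENNReal

/-- A function `f : ℝ^n → ℝ` is directionally convex (dcx). -/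
def DirCx {n : ℕ} (f : (Fin n → ℝ) → ℝ) : Prop :=
  ∀ x y p q : Fin n → ℝ, p ≤ x → x ≤ q → p ≤ y → y ≤ q → x + y = p + q →
    f x + f y ≤ f p + f q

/-- A function `f : ℝ^n → ℝ` is directionally concave (dcv). -/
def DirCv {n : ℕ} (f : (Fin n → ℝ) → ℝ) : Prop :=
  ∀ x y p q : Fin n → ℝ, p ≤ x → x ≤ q → p ≤ y → y ≤ q → x + y = p + q →
    f p + f q ≤ f x + f y

/-- The class of dcx functions. -/
def DcxCl (n : ℕ) (f : (Fin n → ℝ) → ℝ) : Prop := DirCx f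

/-- The class of increasing dcx functions. -/
def IdcxCl (n : ℕ) (f : (Fin n → ℝ) → ℝ) : Prop := Monotone f ∧ DirCx f

/-- The class of increasing dcv functions. -/
def IdcvCl (n : ℕ) (f : (Fin n → ℝ) → ℝ) : Prop := Monotone f ∧ DirCv f

/-- `X ≤_C Y`: the integral stochastic order generated by the function class `C`,
for random vectors on a common probability space `(Ω, P)`. -/
def VecOrd {Ω : Type*} [MeasurableSpace Ω] (C : ∀ n : ℕ, ((Fin n → ℝ) → ℝ) → Prop)
    (P : Measure Ω) {n : ℕ} (X Y : Ω → Fin n → ℝ) : Prop :=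
  ∀ f : (Fin n → ℝ) → ℝ, C n f →
    Integrable (fun ω => f (X ω)) P → Integrable (fun ω => f (Y ω)) P →
    ∫ ω, f (X ω) ∂P ≤ ∫ ω, f (Y ω) ∂P

/-- A bounded Borel set: a relatively compact Borel set. -/
def BoundedBorel {E : Type*} [TopologicalSpace E] [MeasurableSpace E] (B : Set E) : Prop :=
  MeasurableSet B ∧ IsCompact (closure B)

/-- The order on random measures generated by the function class `C`: all vectors of values
on finite families of bounded Borel sets are ordered. -/
def RMOrd {Ω E : Type*} [MeasurableSpace Ω] [TopologicalSpace E] [MeasurableSpace E]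
    (C : ∀ n : ℕ, ((Fin n → ℝ) → ℝ) → Prop) (P : Measure Ω) (Λ1 Λ2 : Ω → Measure E) : Prop :=
  ∀ (n : ℕ) (I : Fin n → Set E), (∀ i, BoundedBorel (I i)) →
    VecOrd C P (fun ω i => (Λ1 ω (I i)).toReal) (fun ω i => (Λ2 ω (I i)).toReal)

/-- A random measure: `ω ↦ Λ ω` where evaluations on Borel sets are measurable and each
realization is locally finite (finite on compacts). -/
def IsRandomMeasure {Ω E : Type*} [MeasurableSpace Ω] [TopologicalSpace E] [MeasurableSpace E]
    (Λ : Ω → Measure E) : Prop :=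
  (∀ B : Set E, MeasurableSet B → Measurable fun ω => Λ ω B) ∧
  (∀ ω, ∀ K : Set E, IsCompact K → Λ ω K < ⊤)

/-!
The values of a random measure on arbitrary bounded Borel sets `I₁, …, Iₙ` are obtained from its
values on the atoms of the Boolean algebra generated by the `Iᵢ` by a fixed linear map with
`0`/`1` coefficients, since each `Iᵢ` is the disjoint union of the atoms it contains. The atoms
are pairwise disjoint bounded Borel sets, so the hypothesis compares the atom vectors; and
composing a dcx (idcx, idcv) function with a linear map with nonnegative coefficients yields a
function of the same kind.
-/

open Matrix

lemma DirCx.comp_monotone_addMonoidHom {n k : ℕ} {f : (Fin n → ℝ) → ℝ} (hf : DirCx f)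
    (A : (Fin k → ℝ) →+ (Fin n → ℝ)) (hA : Monotone A) : DirCx (f ∘ A) :=
  fun x y p q hpx hxq hpy hyq hsum =>
    hf (A x) (A y) (A p) (A q) (hA hpx) (hA hxq) (hA hpy) (hA hyq)
      (by rw [← map_add, ← map_add, hsum])

lemma DirCv.comp_monotone_addMonoidHom {n k : ℕ} {f : (Fin n → ℝ) → ℝ} (hf : DirCv f)
    (A : (Fin k → ℝ) →+ (Fin n → ℝ)) (hA : Monotone A) : DirCv (f ∘ A) :=
  fun x y p q hpx hxq hpy hyq hsum =>
    hf (A x) (A y) (A p) (A q) (hA hpx) (hA hxq) (hA hpy) (hA hyq)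
      (by rw [← map_add, ← map_add, hsum])

lemma Matrix.monotone_mulVec_of_nonneg {m k : Type*} [Fintype k] {M : Matrix m k ℝ}
    (hM : ∀ i j, 0 ≤ M i j) : Monotone (M *ᵥ ·) :=
  fun _ _ hvw i => Finset.sum_le_sum fun j _ => mul_le_mul_of_nonneg_left (hvw j) (hM i j)

def IsStableUnderNonnegMulVec (C : ∀ n : ℕ, ((Fin n → ℝ) → ℝ) → Prop) : Prop :=
  ∀ {m k : ℕ} (M : Matrix (Fin m) (Fin k) ℝ), (∀ i j, 0 ≤ M i j) →
    ∀ f, C m f → C k fun v => f (M *ᵥ v)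

lemma isStableUnderNonnegMulVec_of_dcx_idcx_idcv {C : ∀ n : ℕ, ((Fin n → ℝ) → ℝ) → Prop}
    (hC : C = DcxCl ∨ C = IdcxCl ∨ C = IdcvCl) : IsStableUnderNonnegMulVec C := by
  intro m k M hM f hf
  have hmono := monotone_mulVec_of_nonneg hM
  let A := M.mulVecLin.toAddMonoidHom
  rcases hC with rfl | rfl | rfl
  · exact hf.comp_monotone_addMonoidHom A hmono
  · exact ⟨hf.1.comp hmono, hf.2.comp_monotone_addMonoidHom A hmono⟩
  · exact ⟨hf.1.comp hmono, hf.2.comp_monotone_addMonoidHom A hmono⟩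

lemma VecOrd.mulVec {Ω : Type*} [MeasurableSpace Ω] {C : ∀ n : ℕ, ((Fin n → ℝ) → ℝ) → Prop}
    (hC : IsStableUnderNonnegMulVec C) {P : Measure Ω} {m k : ℕ} {X Y : Ω → Fin k → ℝ}
    (hXY : VecOrd C P X Y) {M : Matrix (Fin m) (Fin k) ℝ} (hM : ∀ i j, 0 ≤ M i j) :
    VecOrd C P (fun ω => M *ᵥ X ω) (fun ω => M *ᵥ Y ω) :=
  fun f hf => hXY _ (hC M hM f hf)

lemma BoundedBorel.iUnion {E ι : Type*} [TopologicalSpace E] [MeasurableSpace E] [Finite ι]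
    {I : ι → Set E} (hI : ∀ i, BoundedBorel (I i)) : BoundedBorel (⋃ i, I i) :=
  ⟨.iUnion fun i => (hI i).1, by
    rw [closure_iUnion_of_finite]; exact isCompact_iUnion fun i => (hI i).2⟩

lemma BoundedBorel.of_subset {E : Type*} [TopologicalSpace E] [MeasurableSpace E]
    {A B : Set E} (hB : BoundedBorel B) (hA : MeasurableSet A) (hAB : A ⊆ B) : BoundedBorel A :=
  ⟨hA, hB.2.of_isClosed_subset isClosed_closure (closure_mono hAB)⟩

lemma IsRandomMeasure.ne_top {Ω E : Type*} [MeasurableSpace Ω] [TopologicalSpace E]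
    [MeasurableSpace E] {Λ : Ω → Measure E} (hΛ : IsRandomMeasure Λ) (ω : Ω) {B : Set E}
    (hB : BoundedBorel B) : Λ ω B ≠ ⊤ :=
  ((measure_mono subset_closure).trans_lt (hΛ.2 ω _ hB.2)).ne

section Atoms

variable {α ι : Type*} (I : ι → Set α)

/-- The clause `∃ i, x ∈ I i` empties the atom of the all-`false` pattern, so that every atom
of a family of bounded sets is bounded. -/
def atom (s : ι → Bool) : Set α :=
  {x | (∃ i, x ∈ I i) ∧ ∀ i, x ∈ I i ↔ s i = true}

lemma atom_subset_iUnion (s : ι → Bool) : atom I s ⊆ ⋃ i, I i :=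
  fun _ hx => Set.mem_iUnion.2 hx.1

lemma pairwise_disjoint_atom : Pairwise (Function.onFun Disjoint (atom I)) := by
  refine fun s t hst => Set.disjoint_left.2 fun x hs ht => hst (funext fun i => ?_)
  exact Bool.eq_iff_iff.2 ((hs.2 i).symm.trans (ht.2 i))

lemma measurableSet_atom [MeasurableSpace α] [Countable ι] {I : ι → Set α}
    (hI : ∀ i, MeasurableSet (I i)) (s : ι → Bool) : MeasurableSet (atom I s) :=
  (Measurable.exists fun i => (hI i).mem).and
    (Measurable.forall fun i => (hI i).mem.iff measurable_const) |>.setOf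

lemma biUnion_atom [Fintype ι] [DecidableEq ι] (i : ι) :
    ⋃ s ∈ Finset.univ.filter (· i = true), atom I s = I i := by
  classical
  ext x
  simp only [Set.mem_iUnion, Finset.mem_filter, Finset.mem_univ, true_and, exists_prop]
  refine ⟨fun ⟨s, hsi, hx⟩ => (hx.2 i).2 hsi, fun hx => ⟨fun j => decide (x ∈ I j), ?_, ?_⟩⟩
  · simpa using hx
  · exact ⟨⟨i, hx⟩, fun j => by simp⟩

lemma measure_eq_sum_atom [MeasurableSpace α] [Fintype ι] [DecidableEq ι] {I : ι → Set α}
    (hI : ∀ i, MeasurableSet (I i)) (μ : Measure α) (i : ι) :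
    μ (I i) = ∑ s ∈ Finset.univ.filter (· i = true), μ (atom I s) := by
  calc μ (I i) = μ (⋃ s ∈ Finset.univ.filter (· i = true), atom I s) := by rw [biUnion_atom]
    _ = _ := measure_biUnion_finset (fun s _ t _ hst => pairwise_disjoint_atom I hst)
      fun s _ => measurableSet_atom hI s

def atomIncidence {κ : Type*} (e : κ ≃ (ι → Bool)) : Matrix ι κ ℝ :=
  Matrix.of fun i j => if e j i = true then 1 else 0

lemma atomIncidence_nonneg {κ : Type*} (e : κ ≃ (ι → Bool)) (i : ι) (j : κ) :
    0 ≤ atomIncidence e i j := by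
  simp only [atomIncidence, Matrix.of_apply]
  split_ifs <;> norm_num

lemma toReal_measure_eq_atomIncidence_mulVec [MeasurableSpace α] [Fintype ι] [DecidableEq ι]
    {κ : Type*} [Fintype κ] (e : κ ≃ (ι → Bool)) {I : ι → Set α} (hI : ∀ i, MeasurableSet (I i))
    (μ : Measure α) (hfin : μ (⋃ i, I i) ≠ ⊤) :
    (fun i => (μ (I i)).toReal) = atomIncidence e *ᵥ fun j => (μ (atom I (e j))).toReal := by
  funext i
  have hfin_atom : ∀ s, μ (atom I s) ≠ ⊤ :=
    fun s => ne_top_of_le_ne_top hfin (measure_mono (atom_subset_iUnion I s))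
  rw [measure_eq_sum_atom hI μ i, ENNReal.toReal_sum fun s _ => hfin_atom s, Finset.sum_filter]
  simp only [Matrix.mulVec, dotProduct, atomIncidence, Matrix.of_apply, ite_mul, one_mul, zero_mul]
  exact (e.sum_comp fun s => if s i = true then (μ (atom I s)).toReal else 0).symm

end Atoms

theorem disjoint_characterization_general
    {Ω : Type*} [MeasurableSpace Ω] (P : Measure Ω)
    {E : Type*} [TopologicalSpace E] [MeasurableSpace E]
    (C : ∀ n : ℕ, ((Fin n → ℝ) → ℝ) → Prop) (hC : C = DcxCl ∨ C = IdcxCl ∨ C = IdcvCl)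
    (Λ1 Λ2 : Ω → Measure E) (hΛ1 : IsRandomMeasure Λ1) (hΛ2 : IsRandomMeasure Λ2)
    (hdisj : ∀ (n : ℕ) (I : Fin n → Set E), (∀ i, BoundedBorel (I i)) →
      Pairwise (Function.onFun Disjoint I) →
      VecOrd C P (fun ω i => (Λ1 ω (I i)).toReal) (fun ω i => (Λ2 ω (I i)).toReal)) :
    RMOrd C P Λ1 Λ2 := by
  intro n I hI
  let e := (Fintype.equivFin (Fin n → Bool)).symm
  have hU : BoundedBorel (⋃ i, I i) := .iUnion hI
  have hatoms := hdisj _ (fun j => atom I (e j))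
    (fun j => hU.of_subset (measurableSet_atom (fun i => (hI i).1) _) (atom_subset_iUnion I _))
    ((pairwise_disjoint_atom I).comp_of_injective e.injective)
  have hvalues : ∀ Λ : Ω → Measure E, IsRandomMeasure Λ →
      (fun ω i => (Λ ω (I i)).toReal) =
        fun ω => atomIncidence e *ᵥ fun j => (Λ ω (atom I (e j))).toReal :=
    fun Λ hΛ => funext fun ω =>
      toReal_measure_eq_atomIncidence_mulVec e (fun i => (hI i).1) _ (hΛ.ne_top ω hU)
  rw [hvalues Λ1 hΛ1, hvalues Λ2 hΛ2]
  exact hatoms.mulVec (isStableUnderNonnegMulVec_of_dcx_idcx_idcv hC) (atomIncidence_nonneg e)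

/-- If the dcx (resp. idcx, idcv) comparison of the vectors of values holds for all
finite families of pairwise DISJOINT bounded Borel sets, then it holds for all finite families of
bounded Borel sets, i.e. `Λ1 ≤_dcx Λ2` (resp. idcx, idcv). -/
theorem disjoint_characterization
    {Ω : Type*} [MeasurableSpace Ω] (P : Measure Ω) [IsProbabilityMeasure P]
    {E : Type*} [TopologicalSpace E] [LocallyCompactSpace E] [SecondCountableTopology E]
    [T2Space E] [MeasurableSpace E] [BorelSpace E]
    (C : ∀ n : ℕ, ((Fin n → ℝ) → ℝ) → Prop) (hC : C = DcxCl ∨ C = IdcxCl ∨ C = IdcvCl)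
    (Λ1 Λ2 : Ω → Measure E) (hΛ1 : IsRandomMeasure Λ1) (hΛ2 : IsRandomMeasure Λ2)
    (hdisj : ∀ (n : ℕ) (I : Fin n → Set E), (∀ i, BoundedBorel (I i)) →
      Pairwise (Function.onFun Disjoint I) →
      VecOrd C P (fun ω i => (Λ1 ω (I i)).toReal) (fun ω i => (Λ2 ω (I i)).toReal)) :
    RMOrd C P Λ1 Λ2 :=
  disjoint_characterization_general P C hC Λ1 Λ2 hΛ1 hΛ2 hdisj
end

section
/- Let Λ1 and Λ2 be random measures on a locally compact second countable Hausdorff space E with Λ1 ≤_dcx Λ2, and let φ : E → E' be a Borel measurable map to a locally compact second countable Hausdorff space E' such that φ^{-1}(B) is a bounded Borel subset of E for every bounded Borel B ⊆ E'. Then the image random measures Λ'_i(·) = Λ_i(φ^{-1}(·)) satisfy Λ'_1 ≤_dcx Λ'_2. The same holds for the idcx and idcv orders. In particular, deterministic displacement of the points of dcx-ordered point processes preserves the dcx order. -/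
open MeasureTheory ENNReal

theorem image_preserves_order_general
    {Ω : Type*} [MeasurableSpace Ω] (P : Measure Ω)
    {E : Type*} [TopologicalSpace E] [MeasurableSpace E]
    {E' : Type*} [TopologicalSpace E'] [MeasurableSpace E']
    (C : ∀ n : ℕ, ((Fin n → ℝ) → ℝ) → Prop)
    (Λ1 Λ2 : Ω → Measure E)
    (φ : E → E') (hφ : Measurable φ)
    (hφb : ∀ B : Set E', BoundedBorel B → BoundedBorel (φ ⁻¹' B))
    (hord : RMOrd C P Λ1 Λ2) :
    RMOrd C P (fun ω => (Λ1 ω).map φ) (fun ω => (Λ2 ω).map φ) := by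
  intro n I hI
  have map_apply_I (Λ : Measure E) (i : Fin n) : Λ.map φ (I i) = Λ (φ ⁻¹' I i) :=
    Measure.map_apply hφ (hI i).1
  simpa only [map_apply_I] using hord n (fun i => φ ⁻¹' I i) fun i => hφb _ (hI i)

/-- The image random measures `Λ'_i(·) = Λ_i(φ⁻¹(·))` under a Borel map `φ : E → E'`
pulling bounded Borel sets back to bounded Borel sets preserve the dcx (resp. idcx, idcv) order. -/
theorem image_preserves_order
    {Ω : Type*} [MeasurableSpace Ω] (P : Measure Ω) [IsProbabilityMeasure P]
    {E : Type*} [TopologicalSpace E] [LocallyCompactSpace E] [SecondCountableTopology E]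
    [T2Space E] [MeasurableSpace E] [BorelSpace E]
    {E' : Type*} [TopologicalSpace E'] [LocallyCompactSpace E'] [SecondCountableTopology E']
    [T2Space E'] [MeasurableSpace E'] [BorelSpace E']
    (C : ∀ n : ℕ, ((Fin n → ℝ) → ℝ) → Prop) (hC : C = DcxCl ∨ C = IdcxCl ∨ C = IdcvCl)
    (Λ1 Λ2 : Ω → Measure E) (hΛ1 : IsRandomMeasure Λ1) (hΛ2 : IsRandomMeasure Λ2)
    (φ : E → E') (hφ : Measurable φ)
    (hφb : ∀ B : Set E', BoundedBorel B → BoundedBorel (φ ⁻¹' B))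
    (hord : RMOrd C P Λ1 Λ2) :
    RMOrd C P (fun ω => (Λ1 ω).map φ) (fun ω => (Λ2 ω).map φ) :=
  image_preserves_order_general P C Λ1 Λ2 φ hφ hφb hord
end

section
/- Let Λ1 and Λ2 be random measures on a locally compact second countable Hausdorff space E with Λ1 ≤_dcx Λ2 (so they have a common mean measure α), and let f : E → [0,∞) be measurable with 0 < ∫_E f dα < ∞. Then the f-mixed Palm versions satisfy (Λ1)_f ≤_idcx (Λ2)_f; explicitly, for every n, all bounded Borel sets B_1,…,B_n and every idcx g : ℝ^n → ℝ, E[(∫_E f dΛ1) · g(Λ1(B_1),…,Λ1(B_n))] ≤ E[(∫_E f dΛ2) · g(Λ2(B_1),…,Λ2(B_n))] whenever both expectations exist. -/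
/-!
Centre `g` at `g 0`. Linear functions are dcx, so `Λ1` and `Λ2` have the same mean measure and the
terms `g 0 · E[∫ f dΛᵢ]` agree. For the centred part, approximate `f` from below by step functions
`∑ⱼ cⱼ 1_{Aⱼ}` with bounded Borel `Aⱼ`: then `(∑ⱼ cⱼ Λ(Aⱼ)) (g(Λ(B)) - g 0)` is the value at
`(Λ(A), Λ(B))` of `(u, v) ↦ ⟨c, u⟩⁺ (g(v⁺) - g 0)`, a product of two nonnegative increasing dcx
functions and therefore dcx, so `Λ1 ≤_dcx Λ2` orders its expectations. Monotone and dominated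
convergence pass to the limit.
-/

open MeasureTheory ENNReal

open Filter Topology Function
open scoped NNReal

lemma max_zero_add_max_zero_le {u a b v : ℝ} (hua : u ≤ a) (hav : a ≤ v)
    (hsum : a + b = u + v) : max a 0 + max b 0 ≤ max u 0 + max v 0 := by
  have := le_max_left u 0; have := le_max_right u 0
  have := le_max_left v 0; have := le_max_right v 0
  rcases le_total a 0 with ha | ha <;> rcases le_total b 0 with hb | hb <;>
    simp only [max_eq_left, max_eq_right, ha, hb] <;> linarith

namespace DirCx

variable {m n : ℕ} {g h : (Fin n → ℝ) → ℝ}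

lemma of_map_add (hg : ∀ x y, g (x + y) = g x + g y) : DirCx g :=
  fun _ _ _ _ _ _ _ _ hsum => by rw [← hg, ← hg, hsum]

lemma sub_const (hg : DirCx g) (c : ℝ) : DirCx fun x => g x - c := by
  intro x y p q hpx hxq hpy hyq hsum
  linarith [hg x y p q hpx hxq hpy hyq hsum]

lemma comp_reindex (hg : DirCx g) (σ : Fin n → Fin m) : DirCx fun w : Fin m → ℝ => g (w ∘ σ) :=
  fun _ _ _ _ hpx hxq hpy hyq hsum => hg _ _ _ _ (fun i => hpx (σ i)) (fun i => hxq (σ i))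
    (fun i => hpy (σ i)) (fun i => hyq (σ i)) (congrArg (· ∘ σ) hsum)

lemma max_zero_of_map_add (hm : Monotone g) (hg : ∀ x y, g (x + y) = g x + g y) :
    DirCx fun x => max (g x) 0 :=
  fun x y p q hpx hxq _ _ hsum =>
    max_zero_add_max_zero_le (hm hpx) (hm hxq) (by rw [← hg, ← hg, hsum])

lemma comp_sup_zero (hm : Monotone g) (hg : DirCx g) : DirCx fun x => g (x ⊔ 0) := by
  intro x y p q hpx hxq hpy hyq hsum
  have hle : x ⊔ 0 + y ⊔ 0 ≤ p ⊔ 0 + q ⊔ 0 := fun i =>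
    max_zero_add_max_zero_le (hpx i) (hxq i) (congrFun hsum i)
  have hpx' : p ⊔ 0 ≤ x ⊔ 0 := sup_le_sup_right hpx 0
  have hpy' : p ⊔ 0 ≤ y ⊔ 0 := sup_le_sup_right hpy 0
  -- `r` completes `p ⊔ 0`, `x ⊔ 0`, `y ⊔ 0` to a box, and lies below `q ⊔ 0`
  set r := x ⊔ 0 + y ⊔ 0 - p ⊔ 0
  have hr : r ≤ q ⊔ 0 := by simpa [r, sub_le_iff_le_add, add_comm] using hle
  calc g (x ⊔ 0) + g (y ⊔ 0) ≤ g (p ⊔ 0) + g r :=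
        hg _ _ _ _ hpx' (le_sub_iff_add_le.2 (by gcongr)) hpy'
          (le_sub_iff_add_le.2 (by rw [add_comm]; gcongr)) (add_sub_cancel _ _).symm
    _ ≤ g (p ⊔ 0) + g (q ⊔ 0) := by gcongr; exact hm hr

lemma mul (hgm : Monotone g) (hhm : Monotone h) (hg0 : ∀ x, 0 ≤ g x) (hh0 : ∀ x, 0 ≤ h x)
    (hg : DirCx g) (hh : DirCx h) : DirCx (g * h) := by
  intro x y p q hpx hxq hpy hyq hsum
  have := hg x y p q hpx hxq hpy hyq hsum
  have := hh x y p q hpx hxq hpy hyq hsum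
  simp only [Pi.mul_apply]
  nlinarith [mul_nonneg (sub_nonneg.2 (hgm hpx)) (sub_nonneg.2 (hhm hxq)),
    mul_nonneg (sub_nonneg.2 (hgm hpy)) (sub_nonneg.2 (hhm hyq)),
    mul_nonneg (by linarith : 0 ≤ g p + g q - g x - g y) (hh0 q),
    mul_nonneg (hg0 p) (by linarith : 0 ≤ h p + h q - h x - h y)]

lemma continuous_of_monotone (hm : Monotone g) (hg : DirCx g) : Continuous g := by
  refine continuous_iff_continuousAt.2 fun a => ?_
  set u : ℝ → ℝ := fun t => g (a + fun _ => t)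
  have hu : Monotone u := fun s t hst => hm (by gcongr; exact fun _ => hst)
  have hwright : ∀ s r t, s ≤ r → r ≤ t → u r + u (s + t - r) ≤ u s + u t :=
    fun s r t hsr hrt => hg _ _ _ _ (fun _ => by simpa using hsr) (fun _ => by simpa using hrt)
      (fun _ => by simp only [Pi.add_apply]; linarith)
      (fun _ => by simp only [Pi.add_apply]; linarith)
      (by ext; simp only [Pi.add_apply]; ring)
  -- Midpoint convexity along the diagonal rules out a jump of `u` at `0`.
  have hright : rightLim u 0 ≤ u 0 := by
    have : ∀ᶠ t in 𝓝[>] 0, 2 * rightLim u 0 - u 0 ≤ u t := by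
      filter_upwards [self_mem_nhdsWithin] with t (ht : 0 < t)
      have := hwright 0 (t / 2) t (by positivity) (by linarith)
      have := hu.rightLim_le (half_pos ht)
      ring_nf at *; linarith
    linarith [ge_of_tendsto (hu.tendsto_rightLim 0) this]
  have hleft : u 0 ≤ leftLim u 0 := by
    have : ∀ᶠ t in 𝓝[>] 0, 2 * u 0 - leftLim u 0 ≤ u t := by
      filter_upwards [self_mem_nhdsWithin] with t (ht : 0 < t)
      have := hwright (-t) 0 t (by linarith) ht.le
      have := hu.le_leftLim (neg_neg_of_pos ht)
      ring_nf at *; linarith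
    linarith [ge_of_tendsto (hu.tendsto_rightLim 0) this]
  have hu0 : ContinuousAt u 0 := hu.continuousAt_iff_leftLim_eq_rightLim.2 <|
    le_antisymm ((hu.leftLim_le le_rfl).trans (hu.le_rightLim le_rfl)) (hright.trans hleft)
  have hdist : Tendsto (fun x => ‖x - a‖) (𝓝 a) (𝓝 0) :=
    tendsto_iff_norm_sub_tendsto_zero.1 tendsto_id
  have hcoord : ∀ x i, |x i - a i| ≤ ‖x - a‖ := fun x i => by
    simpa [Real.norm_eq_abs] using norm_le_pi_norm (x - a) i
  have hga : u 0 = g a := congrArg g (add_zero a)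
  refine tendsto_of_tendsto_of_tendsto_of_le_of_le (g := fun x => u (-‖x - a‖))
    (h := fun x => u ‖x - a‖) ?_ ?_ (fun x => hm fun i => ?_) (fun x => hm fun i => ?_)
  · rw [← hga]; exact hu0.tendsto.comp (by simpa using hdist.neg)
  · rw [← hga]; exact hu0.tendsto.comp hdist
  · have := hcoord x i; simp only [Pi.add_apply]; rw [abs_le] at this; linarith
  · have := hcoord x i; simp only [Pi.add_apply]; rw [abs_le] at this; linarith

end DirCx

section PalmTest

variable {k n : ℕ}

def palmTest (c : Fin k → ℝ) (g : (Fin n → ℝ) → ℝ) (w : Fin (k + n) → ℝ) : ℝ :=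
  max (∑ j, c j * w (Fin.castAdd n j)) 0 * (g (w ∘ Fin.natAdd k ⊔ 0) - g 0)

lemma palmTest_of_nonneg (c : Fin k → ℝ) (hc : 0 ≤ c) (g : (Fin n → ℝ) → ℝ)
    {w : Fin (k + n) → ℝ} (hw : 0 ≤ w) :
    palmTest c g w = (∑ j, c j * w (Fin.castAdd n j)) * (g (w ∘ Fin.natAdd k) - g 0) := by
  have hsum : 0 ≤ ∑ j, c j * w (Fin.castAdd n j) :=
    Finset.sum_nonneg fun j _ => mul_nonneg (hc j) (hw _)
  rw [palmTest, max_eq_left hsum, sup_eq_left.2 fun i => hw _]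

lemma dirCx_palmTest {c : Fin k → ℝ} (hc : 0 ≤ c) {g : (Fin n → ℝ) → ℝ} (hm : Monotone g)
    (hg : DirCx g) : DirCx (palmTest c g) := by
  have hlin : Monotone fun u : Fin k → ℝ => ∑ j, c j * u j :=
    fun u v huv => Finset.sum_le_sum fun j _ => mul_le_mul_of_nonneg_left (huv j) (hc j)
  have hlin_add : ∀ u v : Fin k → ℝ, ∑ j, c j * (u + v) j = ∑ j, c j * u j + ∑ j, c j * v j :=
    fun u v => by simp only [Pi.add_apply, mul_add, Finset.sum_add_distrib]
  have hpos : Monotone fun v : Fin n → ℝ => g (v ⊔ 0) - g 0 :=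
    fun u v huv => sub_le_sub_right (hm (sup_le_sup_right huv 0)) _
  exact DirCx.mul (fun u v huv => max_le_max (hlin fun j => huv _) le_rfl)
    (fun u v huv => hpos fun i => huv _) (fun _ => le_max_right _ _)
    (fun _ => sub_nonneg.2 (hm le_sup_right))
    ((DirCx.max_zero_of_map_add hlin hlin_add).comp_reindex (Fin.castAdd n))
    (((DirCx.comp_sup_zero hm hg).sub_const (g 0)).comp_reindex (Fin.natAdd k))

end PalmTest

section RandomMeasure

variable {Ω E : Type*} [MeasurableSpace Ω] [TopologicalSpace E] [MeasurableSpace E]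
  {P : Measure Ω} {Λ Λ1 Λ2 : Ω → Measure E}

lemma BoundedBorel.append {k n : ℕ} {A : Fin k → Set E} {B : Fin n → Set E}
    (hA : ∀ j, BoundedBorel (A j)) (hB : ∀ i, BoundedBorel (B i)) :
    ∀ i, BoundedBorel (Fin.append A B i) :=
  Fin.addCases (by simpa using hA) (by simpa using hB)

namespace IsRandomMeasure

lemma measurable (hΛ : IsRandomMeasure Λ) : Measurable Λ :=
  Measure.measurable_of_measurable_coe _ hΛ.1

lemma measurable_lintegral (hΛ : IsRandomMeasure Λ) {F : E → ℝ≥0∞} (hF : Measurable F) :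
    Measurable fun ω => ∫⁻ x, F x ∂Λ ω :=
  (Measure.measurable_lintegral hF).comp hΛ.measurable

lemma measure_lt_top (hΛ : IsRandomMeasure Λ) {B : Set E} (hB : BoundedBorel B) (ω : Ω) :
    Λ ω B < ⊤ :=
  (measure_mono subset_closure).trans_lt (hΛ.2 ω _ hB.2)

lemma toReal_sum_mul_measure (hΛ : IsRandomMeasure Λ) {k : ℕ} (c : Fin k → ℝ≥0)
    {A : Fin k → Set E} (hA : ∀ j, BoundedBorel (A j)) (ω : Ω) :
    (∑ j, (c j : ℝ≥0∞) * Λ ω (A j)).toReal = ∑ j, (c j : ℝ) * (Λ ω (A j)).toReal := by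
  rw [ENNReal.toReal_sum fun j _ => mul_ne_top coe_ne_top (hΛ.measure_lt_top (hA j) ω).ne]
  simp only [ENNReal.toReal_mul, coe_toReal]

end IsRandomMeasure

namespace RMOrd

variable {k n : ℕ} {A : Fin k → Set E}

lemma integral_sum_eq (hord : RMOrd DcxCl P Λ1 Λ2) (c : Fin k → ℝ)
    (hA : ∀ j, BoundedBorel (A j))
    (h1 : Integrable (fun ω => ∑ j, c j * (Λ1 ω (A j)).toReal) P)
    (h2 : Integrable (fun ω => ∑ j, c j * (Λ2 ω (A j)).toReal) P) :
    ∫ ω, ∑ j, c j * (Λ1 ω (A j)).toReal ∂P = ∫ ω, ∑ j, c j * (Λ2 ω (A j)).toReal ∂P := by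
  have hadd : ∀ u v : Fin k → ℝ, ∑ j, c j * (u + v) j = ∑ j, c j * u j + ∑ j, c j * v j :=
    fun u v => by simp only [Pi.add_apply, mul_add, Finset.sum_add_distrib]
  refine le_antisymm (hord k A hA (fun u => ∑ j, c j * u j) (DirCx.of_map_add hadd) h1 h2) ?_
  have := hord k A hA (fun u => -∑ j, c j * u j)
    (DirCx.of_map_add fun u v => by rw [hadd, neg_add]) h1.neg h2.neg
  simpa only [integral_neg, neg_le_neg_iff] using this

lemma integral_sum_mul_le (hord : RMOrd DcxCl P Λ1 Λ2) {c : Fin k → ℝ} (hc : 0 ≤ c)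
    (hA : ∀ j, BoundedBorel (A j)) {B : Fin n → Set E} (hB : ∀ i, BoundedBorel (B i))
    {g : (Fin n → ℝ) → ℝ} (hm : Monotone g) (hg : DirCx g)
    (h1 : Integrable (fun ω => (∑ j, c j * (Λ1 ω (A j)).toReal) *
      (g (fun i => (Λ1 ω (B i)).toReal) - g 0)) P)
    (h2 : Integrable (fun ω => (∑ j, c j * (Λ2 ω (A j)).toReal) *
      (g (fun i => (Λ2 ω (B i)).toReal) - g 0)) P) :
    ∫ ω, (∑ j, c j * (Λ1 ω (A j)).toReal) * (g (fun i => (Λ1 ω (B i)).toReal) - g 0) ∂P ≤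
      ∫ ω, (∑ j, c j * (Λ2 ω (A j)).toReal) * (g (fun i => (Λ2 ω (B i)).toReal) - g 0) ∂P := by
  have key : ∀ (Λ : Ω → Measure E) ω, palmTest c g (fun i => (Λ ω (Fin.append A B i)).toReal) =
      (∑ j, c j * (Λ ω (A j)).toReal) * (g (fun i => (Λ ω (B i)).toReal) - g 0) := fun Λ ω => by
    rw [palmTest_of_nonneg c hc g fun _ => ENNReal.toReal_nonneg]
    simp only [Fin.append_left, Function.comp_def, Fin.append_right]
  have := hord _ _ (BoundedBorel.append hA hB) _ (dirCx_palmTest hc hm hg)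
    (by simpa only [key] using h1) (by simpa only [key] using h2)
  simpa only [key] using this

end RMOrd

end RandomMeasure

section Approximation

variable {E : Type*} [TopologicalSpace E] [MeasurableSpace E]

lemma MeasureTheory.SimpleFunc.exists_lintegral_indicator_eq_sum [R1Space E] (ψ : SimpleFunc E ℝ≥0∞)
    (hψ : ∀ x, ψ x ≠ ⊤) {K : Set E} (hK : IsCompact K) (hKm : MeasurableSet K) :
    ∃ (k : ℕ) (c : Fin k → ℝ≥0) (A : Fin k → Set E), (∀ j, BoundedBorel (A j)) ∧
      ∀ μ : Measure E, ∫⁻ x, K.indicator ψ x ∂μ = ∑ j, (c j : ℝ≥0∞) * μ (A j) := by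
  let e := ψ.range.equivFin
  refine ⟨ψ.range.card, fun j => (e.symm j : ℝ≥0∞).toNNReal,
    fun j => ψ ⁻¹' {(e.symm j : ℝ≥0∞)} ∩ K,
    fun j => ⟨(ψ.measurableSet_fiber _).inter hKm, hK.closure_of_subset Set.inter_subset_right⟩,
    fun μ => ?_⟩
  rw [← SimpleFunc.coe_restrict ψ hKm, SimpleFunc.lintegral_eq_lintegral,
    SimpleFunc.restrict_lintegral _ hKm, ← Finset.sum_coe_sort, ← e.symm.sum_comp]
  refine Finset.sum_congr rfl fun j _ => ?_
  obtain ⟨x, hx⟩ := SimpleFunc.mem_range.1 (e.symm j).2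
  rw [ENNReal.coe_toNNReal (hx ▸ hψ x)]

lemma exists_boundedBorel_sum_tendsto_lintegral [T2Space E] [LocallyCompactSpace E]
    [SigmaCompactSpace E] [BorelSpace E] {F : E → ℝ≥0∞} (hF : Measurable F) :
    ∃ (k : ℕ → ℕ) (c : ∀ m, Fin (k m) → ℝ≥0) (A : ∀ m, Fin (k m) → Set E),
      (∀ m j, BoundedBorel (A m j)) ∧ ∀ μ : Measure E,
        (∀ m, ∑ j, (c m j : ℝ≥0∞) * μ (A m j) ≤ ∫⁻ x, F x ∂μ) ∧
        Tendsto (fun m => ∑ j, (c m j : ℝ≥0∞) * μ (A m j)) atTop (𝓝 (∫⁻ x, F x ∂μ)) := by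
  let K := CompactExhaustion.choice E
  have hKm : ∀ m, MeasurableSet (K m) := fun m => (K.isCompact m).isClosed.measurableSet
  let χ : ℕ → E → ℝ≥0∞ := fun m => (K m).indicator (SimpleFunc.eapprox F m)
  have hχm : ∀ m, Measurable (χ m) := fun m => (SimpleFunc.eapprox F m).measurable.indicator (hKm m)
  have hmono : Monotone χ := fun m m' h =>
    (Set.indicator_mono (SimpleFunc.monotone_eapprox F h)).trans
      (Set.indicator_le_indicator_of_subset (K.subset h) fun _ => zero_le)
  have hsup : ⨆ m, χ m = F := by
    rw [Set.iSup_indicator _root_.bot_eq_zero (fun m m' h => SimpleFunc.monotone_eapprox F h)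
      (fun m m' h => K.subset h), K.iUnion_eq, Set.indicator_univ]
    ext x
    simp only [iSup_apply, SimpleFunc.iSup_eapprox_apply hF]
  choose k c A hA hrep using fun m => (SimpleFunc.eapprox F m).exists_lintegral_indicator_eq_sum
    (fun x => (SimpleFunc.eapprox_lt_top F m x).ne) (K.isCompact m) (hKm m)
  refine ⟨k, c, A, hA, fun μ => ⟨fun m => ?_, ?_⟩⟩
  · rw [← hrep]
    exact lintegral_mono fun x => (le_iSup χ m x).trans_eq (congrFun hsup x)
  · have : ⨆ m, ∫⁻ x, χ m x ∂μ = ∫⁻ x, F x ∂μ := by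
      rw [← lintegral_iSup hχm hmono, ← hsup]
      simp only [iSup_apply]
    simp only [← hrep]
    rw [← this]
    exact tendsto_atTop_iSup fun m m' h => lintegral_mono (hmono h)

end Approximation

section Limits

variable {Ω : Type*} [MeasurableSpace Ω] {P : Measure Ω}

lemma tendsto_integral_toReal_mul_of_le {Y : ℕ → Ω → ℝ≥0∞} {T : Ω → ℝ≥0∞}
    (hY : ∀ m, Measurable (Y m)) (hT : Measurable T) (hTfin : ∫⁻ ω, T ω ∂P ≠ ⊤)
    (hle : ∀ m ω, Y m ω ≤ T ω) (hlim : ∀ ω, Tendsto (fun m => Y m ω) atTop (𝓝 (T ω)))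
    {h : Ω → ℝ} (hh : Measurable h) (hh0 : 0 ≤ h)
    (hint : Integrable (fun ω => (T ω).toReal * h ω) P) :
    (∀ m, Integrable (fun ω => (Y m ω).toReal * h ω) P) ∧
      Tendsto (fun m => ∫ ω, (Y m ω).toReal * h ω ∂P) atTop
        (𝓝 (∫ ω, (T ω).toReal * h ω ∂P)) := by
  have hfin := ae_lt_top hT hTfin
  have hmeas : ∀ m, AEStronglyMeasurable (fun ω => (Y m ω).toReal * h ω) P :=
    fun m => ((hY m).ennreal_toReal.mul hh).aestronglyMeasurable
  have hbound : ∀ m, ∀ᵐ ω ∂P, ‖(Y m ω).toReal * h ω‖ ≤ (T ω).toReal * h ω := fun m => by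
    filter_upwards [hfin] with ω hω
    rw [Real.norm_eq_abs, abs_of_nonneg (mul_nonneg ENNReal.toReal_nonneg (hh0 ω))]
    exact mul_le_mul_of_nonneg_right (ENNReal.toReal_mono hω.ne (hle m ω)) (hh0 ω)
  refine ⟨fun m => hint.mono' (hmeas m) (hbound m),
    tendsto_integral_of_dominated_convergence _ hmeas hint hbound ?_⟩
  filter_upwards [hfin] with ω hω
  exact ((ENNReal.tendsto_toReal hω.ne).comp (hlim ω)).mul_const _

lemma MeasureTheory.Integrable.mul_sub_const {T Y : Ω → ℝ} (hTY : Integrable (fun ω => T ω * Y ω) P)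
    (hT : Integrable T P) (a : ℝ) : Integrable (fun ω => T ω * (Y ω - a)) P :=
  (hTY.sub (hT.const_mul a)).congr (Eventually.of_forall fun ω => by simp only [Pi.sub_apply]; ring)

lemma integral_mul_sub_const {T Y : Ω → ℝ} (hTY : Integrable (fun ω => T ω * Y ω) P)
    (hT : Integrable T P) (a : ℝ) :
    ∫ ω, T ω * (Y ω - a) ∂P = ∫ ω, T ω * Y ω ∂P - a * ∫ ω, T ω ∂P := by
  rw [← integral_const_mul, ← integral_sub hTY (hT.const_mul a)]
  simp only [mul_sub, mul_comm a]

end Limits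

section Palm

variable {Ω E : Type*} [MeasurableSpace Ω] [TopologicalSpace E] [MeasurableSpace E]
  {P : Measure Ω} {Λ Λ1 Λ2 : Ω → Measure E} {F : E → ℝ≥0∞}

lemma IsRandomMeasure.integrable_toReal_lintegral (hΛ : IsRandomMeasure Λ) (hF : Measurable F)
    (hfin : ∫⁻ ω, ∫⁻ x, F x ∂Λ ω ∂P ≠ ⊤) :
    Integrable (fun ω => (∫⁻ x, F x ∂Λ ω).toReal) P :=
  integrable_toReal_of_lintegral_ne_top (hΛ.measurable_lintegral hF).aemeasurable hfin

lemma IsRandomMeasure.tendsto_integral_sum_mul (hΛ : IsRandomMeasure Λ) (hF : Measurable F)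
    (hfin : ∫⁻ ω, ∫⁻ x, F x ∂Λ ω ∂P ≠ ⊤) {k : ℕ → ℕ} {c : ∀ m, Fin (k m) → ℝ≥0}
    {A : ∀ m, Fin (k m) → Set E} (hA : ∀ m j, BoundedBorel (A m j))
    (happrox : ∀ μ : Measure E, (∀ m, ∑ j, (c m j : ℝ≥0∞) * μ (A m j) ≤ ∫⁻ x, F x ∂μ) ∧
      Tendsto (fun m => ∑ j, (c m j : ℝ≥0∞) * μ (A m j)) atTop (𝓝 (∫⁻ x, F x ∂μ)))
    {h : Ω → ℝ} (hh : Measurable h) (hh0 : 0 ≤ h)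
    (hint : Integrable (fun ω => (∫⁻ x, F x ∂Λ ω).toReal * h ω) P) :
    (∀ m, Integrable (fun ω => (∑ j, (c m j : ℝ) * (Λ ω (A m j)).toReal) * h ω) P) ∧
      Tendsto (fun m => ∫ ω, (∑ j, (c m j : ℝ) * (Λ ω (A m j)).toReal) * h ω ∂P) atTop
        (𝓝 (∫ ω, (∫⁻ x, F x ∂Λ ω).toReal * h ω ∂P)) := by
  simp only [← hΛ.toReal_sum_mul_measure _ (hA _)]
  exact tendsto_integral_toReal_mul_of_le
    (fun m => Finset.measurable_sum _ fun j _ => (hΛ.1 _ (hA m j).1).const_mul _)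
    (hΛ.measurable_lintegral hF) hfin (fun m ω => (happrox (Λ ω)).1 m)
    (fun ω => (happrox (Λ ω)).2) hh hh0 hint

variable [T2Space E] [LocallyCompactSpace E] [SigmaCompactSpace E] [BorelSpace E]

lemma RMOrd.integral_toReal_lintegral_eq (hord : RMOrd DcxCl P Λ1 Λ2)
    (hΛ1 : IsRandomMeasure Λ1) (hΛ2 : IsRandomMeasure Λ2) (hF : Measurable F)
    (hfin1 : ∫⁻ ω, ∫⁻ x, F x ∂Λ1 ω ∂P ≠ ⊤) (hfin2 : ∫⁻ ω, ∫⁻ x, F x ∂Λ2 ω ∂P ≠ ⊤) :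
    ∫ ω, (∫⁻ x, F x ∂Λ1 ω).toReal ∂P = ∫ ω, (∫⁻ x, F x ∂Λ2 ω).toReal ∂P := by
  obtain ⟨k, c, A, hA, happrox⟩ := exists_boundedBorel_sum_tendsto_lintegral hF
  have approx := fun (Λ : Ω → Measure E) (hΛ : IsRandomMeasure Λ)
      (hfin : ∫⁻ ω, ∫⁻ x, F x ∂Λ ω ∂P ≠ ⊤) =>
    hΛ.tendsto_integral_sum_mul hF hfin hA happrox measurable_const (fun _ => zero_le_one)
      (by simpa only [mul_one] using hΛ.integrable_toReal_lintegral hF hfin)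
  obtain ⟨hi1, hl1⟩ := approx Λ1 hΛ1 hfin1
  obtain ⟨hi2, hl2⟩ := approx Λ2 hΛ2 hfin2
  simp only [mul_one] at hi1 hl1 hi2 hl2
  exact tendsto_nhds_unique hl1
    (hl2.congr fun m => (hord.integral_sum_eq _ (hA m) (hi1 m) (hi2 m)).symm)

lemma RMOrd.integral_toReal_lintegral_mul_sub_le (hord : RMOrd DcxCl P Λ1 Λ2)
    (hΛ1 : IsRandomMeasure Λ1) (hΛ2 : IsRandomMeasure Λ2) (hF : Measurable F)
    (hfin1 : ∫⁻ ω, ∫⁻ x, F x ∂Λ1 ω ∂P ≠ ⊤) (hfin2 : ∫⁻ ω, ∫⁻ x, F x ∂Λ2 ω ∂P ≠ ⊤)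
    {n : ℕ} {B : Fin n → Set E} (hB : ∀ i, BoundedBorel (B i))
    {g : (Fin n → ℝ) → ℝ} (hm : Monotone g) (hg : DirCx g)
    (h1 : Integrable (fun ω => (∫⁻ x, F x ∂Λ1 ω).toReal * g (fun i => (Λ1 ω (B i)).toReal)) P)
    (h2 : Integrable (fun ω => (∫⁻ x, F x ∂Λ2 ω).toReal * g (fun i => (Λ2 ω (B i)).toReal)) P) :
    ∫ ω, (∫⁻ x, F x ∂Λ1 ω).toReal * (g (fun i => (Λ1 ω (B i)).toReal) - g 0) ∂P ≤
      ∫ ω, (∫⁻ x, F x ∂Λ2 ω).toReal * (g (fun i => (Λ2 ω (B i)).toReal) - g 0) ∂P := by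
  obtain ⟨k, c, A, hA, happrox⟩ := exists_boundedBorel_sum_tendsto_lintegral hF
  have hgm := (hg.continuous_of_monotone hm).measurable
  have approx := fun (Λ : Ω → Measure E) (hΛ : IsRandomMeasure Λ)
      (hfin : ∫⁻ ω, ∫⁻ x, F x ∂Λ ω ∂P ≠ ⊤)
      (hint : Integrable (fun ω => (∫⁻ x, F x ∂Λ ω).toReal * g (fun i => (Λ ω (B i)).toReal)) P) =>
    hΛ.tendsto_integral_sum_mul hF hfin hA happrox
      ((hgm.comp (measurable_pi_lambda _ fun i => (hΛ.1 _ (hB i).1).ennreal_toReal)).sub_const _)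
      (fun _ => sub_nonneg.2 (hm fun _ => ENNReal.toReal_nonneg))
      (hint.mul_sub_const (hΛ.integrable_toReal_lintegral hF hfin) (g 0))
  obtain ⟨hi1, hl1⟩ := approx Λ1 hΛ1 hfin1 h1
  obtain ⟨hi2, hl2⟩ := approx Λ2 hΛ2 hfin2 h2
  exact le_of_tendsto_of_tendsto' hl1 hl2 fun m =>
    hord.integral_sum_mul_le (fun j => (c m j).coe_nonneg) (hA m) hB hm hg (hi1 m) (hi2 m)

end Palm

theorem mixed_palm_idcx_general
    {Ω : Type*} [MeasurableSpace Ω] (P : Measure Ω)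
    {E : Type*} [TopologicalSpace E] [LocallyCompactSpace E] [SecondCountableTopology E]
    [T2Space E] [MeasurableSpace E] [BorelSpace E]
    (Λ1 Λ2 : Ω → Measure E) (hΛ1 : IsRandomMeasure Λ1) (hΛ2 : IsRandomMeasure Λ2)
    (f : E → ℝ) (hfm : Measurable f)
    (hfin1 : ∫⁻ ω, ∫⁻ x, ENNReal.ofReal (f x) ∂(Λ1 ω) ∂P < ⊤)
    (hfin2 : ∫⁻ ω, ∫⁻ x, ENNReal.ofReal (f x) ∂(Λ2 ω) ∂P < ⊤)
    (hord : RMOrd DcxCl P Λ1 Λ2) :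
    ∀ (n : ℕ) (B : Fin n → Set E), (∀ i, BoundedBorel (B i)) →
      ∀ g : (Fin n → ℝ) → ℝ, Monotone g → DirCx g →
        Integrable (fun ω =>
          (∫⁻ x, ENNReal.ofReal (f x) ∂(Λ1 ω)).toReal *
            g (fun i => (Λ1 ω (B i)).toReal)) P →
        Integrable (fun ω =>
          (∫⁻ x, ENNReal.ofReal (f x) ∂(Λ2 ω)).toReal *
            g (fun i => (Λ2 ω (B i)).toReal)) P →
        ∫ ω, (∫⁻ x, ENNReal.ofReal (f x) ∂(Λ1 ω)).toReal *
            g (fun i => (Λ1 ω (B i)).toReal) ∂P ≤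
          ∫ ω, (∫⁻ x, ENNReal.ofReal (f x) ∂(Λ2 ω)).toReal *
            g (fun i => (Λ2 ω (B i)).toReal) ∂P := by
  intro n B hB g hm hg hint1 hint2
  have hF : Measurable fun x => ENNReal.ofReal (f x) := hfm.ennreal_ofReal
  have hcentred :=
    hord.integral_toReal_lintegral_mul_sub_le hΛ1 hΛ2 hF hfin1.ne hfin2.ne hB hm hg hint1 hint2
  rw [integral_mul_sub_const hint1 (hΛ1.integrable_toReal_lintegral hF hfin1.ne),
    integral_mul_sub_const hint2 (hΛ2.integrable_toReal_lintegral hF hfin2.ne),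
    hord.integral_toReal_lintegral_eq hΛ1 hΛ2 hF hfin1.ne hfin2.ne] at hcentred
  linarith

/-- If `Λ1 ≤_dcx Λ2` and `f : E → [0,∞)` is measurable with
`0 < E[∫ f dΛ_i] < ∞`, then the `f`-mixed Palm versions satisfy `(Λ1)_f ≤_idcx (Λ2)_f`:
for all bounded Borel `B_1,…,B_n` and every idcx `g`,
`E[(∫ f dΛ1)·g(Λ1(B_1),…,Λ1(B_n))] ≤ E[(∫ f dΛ2)·g(Λ2(B_1),…,Λ2(B_n))]`
whenever both expectations exist. -/
theorem mixed_palm_idcx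
    {Ω : Type*} [MeasurableSpace Ω] (P : Measure Ω) [IsProbabilityMeasure P]
    {E : Type*} [TopologicalSpace E] [LocallyCompactSpace E] [SecondCountableTopology E]
    [T2Space E] [MeasurableSpace E] [BorelSpace E]
    (Λ1 Λ2 : Ω → Measure E) (hΛ1 : IsRandomMeasure Λ1) (hΛ2 : IsRandomMeasure Λ2)
    (f : E → ℝ) (hf0 : ∀ x, 0 ≤ f x) (hfm : Measurable f)
    (hpos1 : 0 < ∫⁻ ω, ∫⁻ x, ENNReal.ofReal (f x) ∂(Λ1 ω) ∂P)
    (hfin1 : ∫⁻ ω, ∫⁻ x, ENNReal.ofReal (f x) ∂(Λ1 ω) ∂P < ⊤)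
    (hpos2 : 0 < ∫⁻ ω, ∫⁻ x, ENNReal.ofReal (f x) ∂(Λ2 ω) ∂P)
    (hfin2 : ∫⁻ ω, ∫⁻ x, ENNReal.ofReal (f x) ∂(Λ2 ω) ∂P < ⊤)
    (hord : RMOrd DcxCl P Λ1 Λ2) :
    ∀ (n : ℕ) (B : Fin n → Set E), (∀ i, BoundedBorel (B i)) →
      ∀ g : (Fin n → ℝ) → ℝ, Monotone g → DirCx g →
        Integrable (fun ω =>
          (∫⁻ x, ENNReal.ofReal (f x) ∂(Λ1 ω)).toReal *
            g (fun i => (Λ1 ω (B i)).toReal)) P →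
        Integrable (fun ω =>
          (∫⁻ x, ENNReal.ofReal (f x) ∂(Λ2 ω)).toReal *
            g (fun i => (Λ2 ω (B i)).toReal)) P →
        ∫ ω, (∫⁻ x, ENNReal.ofReal (f x) ∂(Λ1 ω)).toReal *
            g (fun i => (Λ1 ω (B i)).toReal) ∂P ≤
          ∫ ω, (∫⁻ x, ENNReal.ofReal (f x) ∂(Λ2 ω)).toReal *
            g (fun i => (Λ2 ω (B i)).toReal) ∂P :=
  mixed_palm_idcx_general P Λ1 Λ2 hΛ1 hΛ2 f hfm hfin1 hfin2 hord
end

section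
/- Let Φ1 and Φ2 be random measures (in particular, point processes) on a locally compact second countable Hausdorff space E with Φ1 ≤_idcv Φ2. Then the void probabilities are ordered: for every m and all Borel sets A_1,…,A_m ⊆ E, P(Φ1(A_i) = 0 for all i = 1,…,m) ≥ P(Φ2(A_i) = 0 for all i = 1,…,m). Consequently, for any index set S and any function h : E × S → ℝ measurable in its first argument, the extremal shot-noise fields U_{Φ_i}(y) = sup over the atoms x of Φ_i of h(x,y) satisfy {U_{Φ1}(y)}_{y∈S} ≤_lo {U_{Φ2}(y)}_{y∈S}, i.e., P(U_{Φ1}(y_j) ≤ a_j, j = 1,…,m) ≥ P(U_{Φ2}(y_j) ≤ a_j, j = 1,…,m) for all y_1,…,y_m ∈ S and a_1,…,a_m ∈ ℝ, since U_Φ(y) ≤ a if and only if Φ({x : h(x,y) > a}) = 0. -/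
open MeasureTheory ENNReal

/-- The extremal shot-noise field `U_Φ(y) = sup_{x atom of Φ} h(x,y)`, with values in `EReal`
(`⊥` if there are no atoms). -/
noncomputable def extremalSN {E S : Type*} [TopologicalSpace E] [MeasurableSpace E]
    (Φ : Measure E) (h : E → S → ℝ) (y : S) : EReal :=
  ⨆ (x : E) (_ : Φ {x} ≠ 0), ((h x y : ℝ) : EReal)

/-! The functions `x ↦ min (k * ∑ i, x i) 1` are idcv (monotone concave functions of the sum),
and as `k → ∞` their expectations tend to the probability that some coordinate is nonzero. Hence
idcv ordering of the vectors `(Φ (B i))ᵢ` orders the void probabilities of bounded Borel sets;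
general Borel sets are reached by a compact exhaustion and continuity from above. Finally
`U_Φ(y) ≤ a` is the void event of `{x | a < h x y}`, since the realizations are purely atomic. -/

open Filter Topology

theorem ConcaveOn.add_le_add_of_mem_Icc {g : ℝ → ℝ} {a b s t : ℝ}
    (hg : ConcaveOn ℝ (Set.Icc a b) g) (hs : s ∈ Set.Icc a b) (ht : t ∈ Set.Icc a b)
    (hst : s + t = a + b) : g a + g b ≤ g s + g t := by
  obtain rfl | hab := (hs.1.trans hs.2).eq_or_lt
  · obtain rfl : s = a := le_antisymm hs.2 hs.1
    obtain rfl : t = s := le_antisymm ht.2 ht.1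
    rfl
  have hba : 0 < b - a := sub_pos.2 hab
  -- `s` and `t` are the two convex combinations of `a, b` with swapped weights
  set u := (b - s) / (b - a)
  set v := (s - a) / (b - a)
  have hu : 0 ≤ u := div_nonneg (sub_nonneg.2 hs.2) hba.le
  have hv : 0 ≤ v := div_nonneg (sub_nonneg.2 hs.1) hba.le
  have huv : u + v = 1 := by
    rw [← add_div, div_eq_one_iff_eq hba.ne']
    ring
  have hs' : u • a + v • b = s := by simp only [smul_eq_mul, u, v]; field_simp; ring
  have ht' : v • a + u • b = t := by
    simp only [smul_eq_mul, u, v]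
    field_simp
    linear_combination (a - b) * hst
  have ha : a ∈ Set.Icc a b := Set.left_mem_Icc.2 hab.le
  have hb : b ∈ Set.Icc a b := Set.right_mem_Icc.2 hab.le
  clear_value u v
  have h1 := hg.2 ha hb hu hv huv
  have h2 := hg.2 ha hb hv hu (by linarith)
  rw [hs'] at h1
  rw [ht'] at h2
  simp only [smul_eq_mul] at h1 h2
  linear_combination h1 + h2 - (g a + g b) * huv

theorem idcvCl_comp_sum {g : ℝ → ℝ} (hmono : Monotone g) (hconc : ConcaveOn ℝ Set.univ g)
    (n : ℕ) : IdcvCl n fun x => g (∑ i, x i) := by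
  have sum_mono : Monotone fun x : Fin n → ℝ => ∑ i, x i :=
    fun x y hxy => Finset.sum_le_sum fun i _ => hxy i
  refine ⟨hmono.comp sum_mono, fun x y p q hpx hxq hpy hyq hsum => ?_⟩
  refine (hconc.subset (Set.subset_univ _) (convex_Icc _ _)).add_le_add_of_mem_Icc
    ⟨sum_mono hpx, sum_mono hxq⟩ ⟨sum_mono hpy, sum_mono hyq⟩ ?_
  simpa only [Pi.add_apply, Finset.sum_add_distrib] using congrArg (fun z => ∑ i, z i) hsum

theorem monotone_min_mul_one {k : ℝ} (hk : 0 ≤ k) : Monotone fun t : ℝ => min (k * t) 1 :=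
  fun _ _ hst => min_le_min_right 1 (mul_le_mul_of_nonneg_left hst hk)

theorem concaveOn_min_mul_one {k : ℝ} (hk : 0 ≤ k) :
    ConcaveOn ℝ Set.univ fun t : ℝ => min (k * t) 1 :=
  ((concaveOn_id convex_univ).smul hk).inf (concaveOn_const 1 convex_univ)

theorem tendsto_min_natCast_mul_one {z : ℝ} (hz : 0 ≤ z) :
    Tendsto (fun k : ℕ => min (k * z) 1) atTop (𝓝 ({z | z ≠ 0}.indicator 1 z)) := by
  obtain rfl | hz := hz.eq_or_lt
  · simp
  rw [Set.indicator_of_mem hz.ne', Pi.one_apply]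
  refine tendsto_const_nhds.congr' ?_
  filter_upwards [(tendsto_natCast_atTop_atTop.atTop_mul_const hz).eventually_ge_atTop 1]
    with k hk using (min_eq_right hk).symm

theorem abs_min_mul_one_le_one {k z : ℝ} (hk : 0 ≤ k) (hz : 0 ≤ z) : |min (k * z) 1| ≤ 1 := by
  rw [abs_of_nonneg (le_min (mul_nonneg hk hz) zero_le_one)]
  exact min_le_right _ _

section Void

variable {Ω : Type*} [MeasurableSpace Ω] {P : Measure Ω} [IsFiniteMeasure P]

theorem integrable_min_natCast_mul_one {Z : Ω → ℝ} (hZ : Measurable Z) (hZ0 : 0 ≤ Z) (k : ℕ) :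
    Integrable (fun ω => min (k * Z ω) 1) P :=
  .of_bound ((hZ.const_mul _).min measurable_const).aestronglyMeasurable 1
    (ae_of_all _ fun ω => abs_min_mul_one_le_one k.cast_nonneg (hZ0 ω))

theorem tendsto_integral_min_natCast_mul_one {Z : Ω → ℝ} (hZ : Measurable Z) (hZ0 : 0 ≤ Z) :
    Tendsto (fun k : ℕ => ∫ ω, min (k * Z ω) 1 ∂P) atTop (𝓝 (P.real {ω | Z ω ≠ 0})) := by
  have hmeas : MeasurableSet {ω | Z ω ≠ 0} := (measurableSet_singleton 0).compl.preimage hZ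
  rw [← integral_indicator_one hmeas]
  exact tendsto_integral_of_dominated_convergence (fun _ => 1)
    (fun k => (integrable_min_natCast_mul_one hZ hZ0 k).aestronglyMeasurable)
    (integrable_const 1)
    (fun k => ae_of_all _ fun ω => abs_min_mul_one_le_one k.cast_nonneg (hZ0 ω))
    (ae_of_all _ fun ω => tendsto_min_natCast_mul_one (hZ0 ω))

theorem measure_forall_eq_zero_le_of_vecOrd_idcv {n : ℕ} {X Y : Ω → Fin n → ℝ}
    (hX : Measurable X) (hY : Measurable Y) (hX0 : 0 ≤ X) (hY0 : 0 ≤ Y)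
    (hXY : VecOrd IdcvCl P X Y) :
    P {ω | ∀ i, Y ω i = 0} ≤ P {ω | ∀ i, X ω i = 0} := by
  have measurable_sum : ∀ Z : Ω → Fin n → ℝ, Measurable Z → Measurable fun ω => ∑ i, Z ω i :=
    fun Z hZ => Finset.measurable_sum _ fun i _ => (measurable_pi_apply i).comp hZ
  have sum_nonneg : ∀ Z : Ω → Fin n → ℝ, 0 ≤ Z → 0 ≤ fun ω => ∑ i, Z ω i :=
    fun Z hZ0 ω => Finset.sum_nonneg fun i _ => hZ0 ω i
  have tendsto_void_compl : ∀ Z : Ω → Fin n → ℝ, Measurable Z → 0 ≤ Z →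
      Tendsto (fun k : ℕ => ∫ ω, min (k * ∑ i, Z ω i) 1 ∂P) atTop
        (𝓝 (P.real {ω | ∀ i, Z ω i = 0}ᶜ)) := by
    intro Z hZ hZ0
    have hvoid : {ω | ∀ i, Z ω i = 0}ᶜ = {ω | ∑ i, Z ω i ≠ 0} := by
      ext ω
      simp [Finset.sum_eq_zero_iff_of_nonneg fun i _ => hZ0 ω i]
    rw [hvoid]
    exact tendsto_integral_min_natCast_mul_one (measurable_sum Z hZ) (sum_nonneg Z hZ0)
  have hle : P.real {ω | ∀ i, X ω i = 0}ᶜ ≤ P.real {ω | ∀ i, Y ω i = 0}ᶜ :=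
    le_of_tendsto_of_tendsto' (tendsto_void_compl X hX hX0) (tendsto_void_compl Y hY hY0)
      fun k => hXY _ (idcvCl_comp_sum (monotone_min_mul_one k.cast_nonneg)
        (concaveOn_min_mul_one k.cast_nonneg) n)
        (integrable_min_natCast_mul_one (measurable_sum X hX) (sum_nonneg X hX0) k)
        (integrable_min_natCast_mul_one (measurable_sum Y hY) (sum_nonneg Y hY0) k)
  have measurableSet_void : ∀ Z : Ω → Fin n → ℝ, Measurable Z →
      MeasurableSet {ω | ∀ i, Z ω i = 0} := fun Z hZ => by
    simp only [Set.ofPred_forall]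
    exact .iInter fun i => measurableSet_eq_fun ((measurable_pi_apply i).comp hZ) measurable_const
  rw [measureReal_compl (measurableSet_void X hX), measureReal_compl (measurableSet_void Y hY)]
    at hle
  rw [← ENNReal.toReal_le_toReal (measure_ne_top _ _) (measure_ne_top _ _)]
  simp only [measureReal_def] at hle
  linarith

end Void

section RandomMeasure

variable {Ω E : Type*} [MeasurableSpace Ω] [TopologicalSpace E] [MeasurableSpace E]
  {Φ : Ω → Measure E}

theorem CompactExhaustion.measure_eq_zero_iff (K : CompactExhaustion E) (μ : Measure E)
    (A : Set E) : μ A = 0 ↔ ∀ n, μ (A ∩ K n) = 0 := by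
  rw [← measure_iUnion_null_iff, ← Set.inter_iUnion, K.iUnion_eq, Set.inter_univ]

theorem MeasurableSet.boundedBorel_inter [T2Space E] [OpensMeasurableSpace E] {A K : Set E}
    (hA : MeasurableSet A) (hK : IsCompact K) : BoundedBorel (A ∩ K) :=
  ⟨hA.inter hK.measurableSet, hK.closure_of_subset Set.inter_subset_right⟩

theorem IsRandomMeasure.measure_ne_top_of_isCompact_closure (hΦ : IsRandomMeasure Φ) (ω : Ω)
    {B : Set E} (hB : IsCompact (closure B)) : Φ ω B ≠ ⊤ :=
  ((measure_mono subset_closure).trans_lt (hΦ.2 ω _ hB)).ne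

theorem IsRandomMeasure.measurableSet_void {ι : Type*} [Countable ι] (hΦ : IsRandomMeasure Φ)
    {A : ι → Set E} (hA : ∀ i, MeasurableSet (A i)) :
    MeasurableSet {ω | ∀ i, Φ ω (A i) = 0} := by
  simp only [Set.ofPred_forall]
  exact .iInter fun i => hΦ.1 _ (hA i) (measurableSet_singleton 0)

theorem IsRandomMeasure.measure_void_eq_iInf {ι : Type*} [Countable ι] [T2Space E]
    [OpensMeasurableSpace E] {P : Measure Ω} [IsFiniteMeasure P] (hΦ : IsRandomMeasure Φ)
    (K : CompactExhaustion E) {A : ι → Set E} (hA : ∀ i, MeasurableSet (A i)) :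
    P {ω | ∀ i, Φ ω (A i) = 0} = ⨅ n, P {ω | ∀ i, Φ ω (A i ∩ K n) = 0} := by
  have hvoid : {ω | ∀ i, Φ ω (A i) = 0} = ⋂ n, {ω | ∀ i, Φ ω (A i ∩ K n) = 0} := by
    ext ω
    simp only [Set.mem_ofPred_eq, Set.mem_iInter]
    exact ⟨fun h n i => (K.measure_eq_zero_iff _ _).1 (h i) n,
      fun h i => (K.measure_eq_zero_iff _ _).2 fun n => h n i⟩
  rw [hvoid]
  refine Antitone.measure_iInter ?_ (fun n => ?_) ⟨0, measure_ne_top _ _⟩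
  · exact fun n n' hnn' ω hω i =>
      measure_mono_null (Set.inter_subset_inter_right _ (K.subset hnn')) (hω i)
  · exact (hΦ.measurableSet_void fun i =>
      (hA i).inter (K.isCompact n).measurableSet).nullMeasurableSet

theorem measure_void_le_of_rmOrd_idcv {P : Measure Ω} [IsFiniteMeasure P]
    {Φ1 Φ2 : Ω → Measure E} (hΦ1 : IsRandomMeasure Φ1) (hΦ2 : IsRandomMeasure Φ2)
    (hord : RMOrd IdcvCl P Φ1 Φ2) {m : ℕ} {B : Fin m → Set E} (hB : ∀ i, BoundedBorel (B i)) :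
    P {ω | ∀ i, Φ2 ω (B i) = 0} ≤ P {ω | ∀ i, Φ1 ω (B i) = 0} := by
  have void_eq : ∀ Φ : Ω → Measure E, IsRandomMeasure Φ →
      {ω | ∀ i, Φ ω (B i) = 0} = {ω | ∀ i, (Φ ω (B i)).toReal = 0} := fun Φ hΦ => by
    ext ω
    simp [ENNReal.toReal_eq_zero_iff, hΦ.measure_ne_top_of_isCompact_closure ω (hB _).2]
  have measurable_values : ∀ Φ : Ω → Measure E, IsRandomMeasure Φ →
      Measurable fun ω i => (Φ ω (B i)).toReal := fun Φ hΦ =>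
    measurable_pi_lambda _ fun i => (hΦ.1 _ (hB i).1).ennreal_toReal
  rw [void_eq Φ1 hΦ1, void_eq Φ2 hΦ2]
  exact measure_forall_eq_zero_le_of_vecOrd_idcv (measurable_values Φ1 hΦ1)
    (measurable_values Φ2 hΦ2) (fun _ _ => ENNReal.toReal_nonneg)
    (fun _ _ => ENNReal.toReal_nonneg) (hord m B hB)

end RandomMeasure

theorem extremalSN_le_iff {E S : Type*} [TopologicalSpace E] [MeasurableSpace E] {Φ : Measure E}
    (hΦ : ∀ B : Set E, MeasurableSet B → (Φ B = 0 ↔ ∀ x ∈ B, Φ {x} = 0)) {h : E → S → ℝ} {y : S}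
    (hmeas : Measurable fun x => h x y) (a : ℝ) :
    extremalSN Φ h y ≤ a ↔ Φ {x | a < h x y} = 0 := by
  rw [hΦ _ (measurableSet_lt measurable_const hmeas), extremalSN, iSup₂_le_iff]
  simp only [EReal.coe_le_coe_iff, Set.mem_ofPred_eq]
  exact forall_congr' fun x => by rw [← not_lt]; tauto

/-- If `Φ1 ≤_idcv Φ2` then void probabilities are ordered:
`P(Φ1(A_i) = 0 ∀i) ≥ P(Φ2(A_i) = 0 ∀i)` for all Borel `A_1,…,A_m`; consequently the extremal
shot-noise fields are ordered in the lower orthant order: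
`P(U_{Φ1}(y_j) ≤ a_j ∀j) ≥ P(U_{Φ2}(y_j) ≤ a_j ∀j)`. -/
theorem void_probabilities_and_extremal_sn
    {Ω : Type*} [MeasurableSpace Ω] (P : Measure Ω) [IsProbabilityMeasure P]
    {E : Type*} [TopologicalSpace E] [LocallyCompactSpace E] [SecondCountableTopology E]
    [T2Space E] [MeasurableSpace E] [BorelSpace E]
    {S : Type*}
    (Φ1 Φ2 : Ω → Measure E) (hΦ1 : IsRandomMeasure Φ1) (hΦ2 : IsRandomMeasure Φ2)
    -- each realization is purely atomic (a point measure): a Borel set is null iff it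
    -- contains no atoms
    (hpure1 : ∀ ω, ∀ B : Set E, MeasurableSet B → (Φ1 ω B = 0 ↔ ∀ x ∈ B, Φ1 ω {x} = 0))
    (hpure2 : ∀ ω, ∀ B : Set E, MeasurableSet B → (Φ2 ω B = 0 ↔ ∀ x ∈ B, Φ2 ω {x} = 0))
    (h : E → S → ℝ) (hmeas : ∀ y : S, Measurable fun x => h x y)
    (hord : RMOrd IdcvCl P Φ1 Φ2) :
    (∀ (m : ℕ) (A : Fin m → Set E), (∀ i, MeasurableSet (A i)) →
      P {ω | ∀ i, Φ2 ω (A i) = 0} ≤ P {ω | ∀ i, Φ1 ω (A i) = 0}) ∧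
    (∀ (m : ℕ) (y : Fin m → S) (a : Fin m → ℝ),
      P {ω | ∀ j, extremalSN (Φ2 ω) h (y j) ≤ (a j : EReal)} ≤
        P {ω | ∀ j, extremalSN (Φ1 ω) h (y j) ≤ (a j : EReal)}) := by
  obtain ⟨K⟩ : Nonempty (CompactExhaustion E) := inferInstance
  have void : ∀ (m : ℕ) (A : Fin m → Set E), (∀ i, MeasurableSet (A i)) →
      P {ω | ∀ i, Φ2 ω (A i) = 0} ≤ P {ω | ∀ i, Φ1 ω (A i) = 0} := fun m A hA => by
    rw [hΦ1.measure_void_eq_iInf K hA, hΦ2.measure_void_eq_iInf K hA]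
    exact iInf_mono fun n => measure_void_le_of_rmOrd_idcv hΦ1 hΦ2 hord fun i =>
      (hA i).boundedBorel_inter (K.isCompact n)
  refine ⟨void, fun m y a => ?_⟩
  simp only [extremalSN_le_iff (hpure1 _) (hmeas _), extremalSN_le_iff (hpure2 _) (hmeas _)]
  exact void m (fun j => {x | a j < h x (y j)}) fun j =>
    measurableSet_lt measurable_const (hmeas _)
end

section
/- Let a > 0 and c ≥ 1. Let N_{ca} be a Poisson random variable with mean ca and N_a a Poisson random variable with mean a. Then N_{ca} ≤_cx c·N_a: for every convex function f : ℝ → ℝ such that both expectations are finite, E[f(N_{ca})] ≤ E[f(c·N_a)]. -/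
/-!
Poisson thinning: if, given `N_{ca} = n`, each of the `n` points is kept independently with
probability `1/c`, the number `M` of kept points is Poisson with mean `a`, and
`E[c M | N_{ca}] = N_{ca}`; so the theorem is conditional Jensen. Concretely, Jensen for the
binomial weights `B_{n,j}(1/c)` (Bernstein polynomials) gives `f n ≤ ∑ⱼ B_{n,j}(1/c) f (c j)`;
averaging over `n` against `Po(ca)` and exchanging the two sums turns the right side into
`∑ⱼ Po(a){j} f (c j)`.
-/

open MeasureTheory ProbabilityTheory Polynomial Finset
open scoped NNReal Nat

lemma bernsteinPolynomial_eval_nonneg {x : ℝ} (hx₀ : 0 ≤ x) (hx₁ : x ≤ 1) (n ν : ℕ) :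
    0 ≤ (bernsteinPolynomial ℝ n ν).eval x := by
  have : 0 ≤ 1 - x := sub_nonneg.mpr hx₁
  simp only [bernsteinPolynomial, eval_mul, eval_pow, eval_sub, eval_one, eval_X, eval_natCast]
  positivity

lemma ConvexOn.apply_mul_le_sum_bernsteinPolynomial {g : ℝ → ℝ} (hg : ConvexOn ℝ Set.univ g)
    {x : ℝ} (hx₀ : 0 ≤ x) (hx₁ : x ≤ 1) (n : ℕ) :
    g (n * x) ≤ ∑ ν ∈ range (n + 1), (bernsteinPolynomial ℝ n ν).eval x * g ν := by
  have hmean : ∑ ν ∈ range (n + 1), (bernsteinPolynomial ℝ n ν).eval x • (ν : ℝ) = n * x := by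
    simpa [eval_finsetSum, mul_comm] using congrArg (eval x) (bernsteinPolynomial.sum_smul ℝ n)
  have hsum : ∑ ν ∈ range (n + 1), (bernsteinPolynomial ℝ n ν).eval x = 1 := by
    simpa [eval_finsetSum] using congrArg (eval x) (bernsteinPolynomial.sum ℝ n)
  rw [← hmean]
  exact hg.map_sum_le (fun ν _ => bernsteinPolynomial_eval_nonneg hx₀ hx₁ n ν) hsum
    (fun _ _ => Set.mem_univ _)

lemma ConvexOn.apply_natCast_le_tsum_bernsteinPolynomial {f : ℝ → ℝ} (hf : ConvexOn ℝ Set.univ f)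
    {c : ℝ} (hc : 1 ≤ c) (n : ℕ) :
    f n ≤ ∑' j : ℕ, (bernsteinPolynomial ℝ n j).eval c⁻¹ * f (c * j) := by
  rw [tsum_eq_sum (s := range (n + 1)) fun j hj => by
    rw [bernsteinPolynomial.eq_zero_of_lt ℝ (by simpa using hj), eval_zero, zero_mul]]
  have := (hf.comp_linearMap (c • LinearMap.id)).apply_mul_le_sum_bernsteinPolynomial
    (x := c⁻¹) (by positivity) (inv_le_one_of_one_le₀ hc) n
  have hc₀ : c ≠ 0 := by positivity
  simpa [mul_inv_cancel_left₀, mul_left_comm c, hc₀] using this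

namespace ProbabilityTheory

lemma poissonMeasure_real_add_mul_bernsteinPolynomial {c : ℝ≥0} (hc : 1 ≤ c) (r : ℝ≥0) (j m : ℕ) :
    Po(c * r).real {m + j} * (bernsteinPolynomial ℝ (m + j) j).eval (c : ℝ)⁻¹ =
      Po(r).real {j} * Po((c - 1) * r).real {m} := by
  have hc₀ : (c : ℝ) ≠ 0 := by positivity
  have hchoose : ((m + j).choose j : ℝ) * m ! * j ! = (m + j)! := by
    exact_mod_cast Nat.add_choose_mul_factorial_mul_factorial m j
  have hq : 1 - (c : ℝ)⁻¹ = (c - 1) / c := by field_simp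
  have hchoose₀ : ((m + j).choose j : ℝ) ≠ 0 := by
    exact_mod_cast (Nat.choose_pos (Nat.le_add_left j m)).ne'
  have hexp : Real.exp (-(c * r)) = Real.exp (-r) * Real.exp (-((c - 1) * r)) := by
    rw [← Real.exp_add]; ring_nf
  simp only [poissonMeasure_real_singleton, bernsteinPolynomial, eval_mul, eval_pow, eval_sub,
    eval_one, eval_X, eval_natCast, NNReal.coe_mul, NNReal.coe_sub hc, NNReal.coe_one,
    Nat.add_sub_cancel, hexp, ← hchoose]
  rw [hq, div_pow, inv_pow, mul_pow, mul_pow, pow_add, pow_add]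
  field_simp

lemma hasSum_poissonMeasure_real_mul_bernsteinPolynomial {c : ℝ≥0} (hc : 1 ≤ c) (r : ℝ≥0)
    (j : ℕ) :
    HasSum (fun n => Po(c * r).real {n} * (bernsteinPolynomial ℝ n j).eval (c : ℝ)⁻¹)
      (Po(r).real {j}) := by
  have hlow : ∑ n ∈ range j, Po(c * r).real {n} * (bernsteinPolynomial ℝ n j).eval (c : ℝ)⁻¹ = 0 :=
    sum_eq_zero fun n hn => by
      rw [bernsteinPolynomial.eq_zero_of_lt ℝ (mem_range.mp hn), eval_zero, mul_zero]
  rw [← hasSum_nat_add_iff' j, hlow, sub_zero]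
  simp_rw [poissonMeasure_real_add_mul_bernsteinPolynomial hc]
  simpa [poissonMeasure_real_singleton] using
    (hasSum_one_poissonMeasure ((c - 1) * r)).mul_left (Po(r).real {j})

theorem integral_poissonMeasure_le_integral_mul {c : ℝ≥0} (hc : 1 ≤ c) (r : ℝ≥0) {f : ℝ → ℝ}
    (hf : ConvexOn ℝ Set.univ f) (hfi : Integrable (fun n : ℕ => f n) Po(c * r))
    (hfi' : Integrable (fun n : ℕ => f (c * n)) Po(r)) :
    ∫ n, f n ∂Po(c * r) ≤ ∫ n, f (c * n) ∂Po(r) := by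
  let w : ℕ → ℕ → ℝ := fun n j => (bernsteinPolynomial ℝ n j).eval (c : ℝ)⁻¹
  have hc' : (1 : ℝ) ≤ c := by exact_mod_cast hc
  have hthin (j : ℕ) : HasSum (fun n => Po(c * r).real {n} * w n j) (Po(r).real {j}) :=
    hasSum_poissonMeasure_real_mul_bernsteinPolynomial hc r j
  -- the `j`-th row of this double series has absolute sum `Po(r){j} |f (c j)|`
  have hF : Summable (Function.uncurry fun j n => Po(c * r).real {n} * w n j * f (c * j)) := by
    have hw₀ (n j : ℕ) : 0 ≤ w n j :=
      bernsteinPolynomial_eval_nonneg (by positivity) (inv_le_one_of_one_le₀ hc') n j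
    refine .of_norm ((summable_prod_of_nonneg fun _ => norm_nonneg _).mpr ⟨fun j => ?_, ?_⟩)
    · simp_rw [Function.uncurry, norm_mul, Real.norm_of_nonneg measureReal_nonneg,
        Real.norm_of_nonneg (hw₀ _ _)]
      exact ((hthin j).mul_right _).summable
    · simp_rw [Function.uncurry, norm_mul, Real.norm_of_nonneg measureReal_nonneg,
        Real.norm_of_nonneg (hw₀ _ _), ((hthin _).mul_right _).tsum_eq]
      simpa [poissonMeasure_real_singleton] using integrable_poissonMeasure_iff.mp hfi'
  have hsum : Summable fun n : ℕ => Po(c * r).real {n} * f n := by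
    refine .of_norm ?_
    simpa [poissonMeasure_real_singleton, abs_mul] using integrable_poissonMeasure_iff.mp hfi
  calc ∫ n, f n ∂Po(c * r) = ∑' n : ℕ, Po(c * r).real {n} * f n := by
        simp [integral_poissonMeasure, poissonMeasure_real_singleton]
    _ ≤ ∑' n : ℕ, ∑' j : ℕ, Po(c * r).real {n} * w n j * f (c * j) := by
        refine hsum.tsum_le_tsum (fun n => ?_) hF.prod_symm.prod
        simp_rw [mul_assoc, tsum_mul_left]
        exact mul_le_mul_of_nonneg_left (hf.apply_natCast_le_tsum_bernsteinPolynomial hc' n)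
          measureReal_nonneg
    _ = ∑' j : ℕ, Po(r).real {j} * f (c * j) := by
        rw [hF.tsum_comm]
        exact tsum_congr fun j => ((hthin j).mul_right _).tsum_eq
    _ = ∫ n, f (c * n) ∂Po(r) := by
        simp [integral_poissonMeasure, poissonMeasure_real_singleton]

lemma HasLaw.integrable_comp_iff {Ω 𝓧 E : Type*} [MeasurableSpace Ω]
    [MeasurableSpace 𝓧] [NormedAddCommGroup E] {P : Measure Ω} {μ : Measure 𝓧} {X : Ω → 𝓧}
    (hX : HasLaw X μ P) {f : 𝓧 → E} (hf : AEStronglyMeasurable f μ) :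
    Integrable (fun ω => f (X ω)) P ↔ Integrable f μ := by
  rw [← hX.map_eq] at hf ⊢
  exact (integrable_map_measure hf hX.aemeasurable).symm

lemma hasLaw_poissonMeasure {Ω : Type*} [MeasurableSpace Ω] {P : Measure Ω} [IsFiniteMeasure P]
    {N : Ω → ℕ} (hN : Measurable N) {r : ℝ≥0}
    (h : ∀ k : ℕ, (P {ω | N ω = k}).toReal = Real.exp (-r) * r ^ k / k !) :
    HasLaw N Po(r) P where
  aemeasurable := hN.aemeasurable
  map_eq := Measure.ext_of_singleton fun k => by
    rw [Measure.map_apply hN (measurableSet_singleton k), poissonMeasure_singleton, ← h k,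
      ENNReal.ofReal_toReal (measure_ne_top _ _)]
    rfl

end ProbabilityTheory

/-- For `a > 0` and `c ≥ 1`, a Poisson random variable `N_{ca}` with mean `ca` is
dominated in the convex order by `c` times a Poisson random variable `N_a` with mean `a`:
`E[f(N_{ca})] ≤ E[f(c·N_a)]` for every convex `f : ℝ → ℝ` with both expectations finite. -/
theorem poisson_convex_order
    {Ω : Type*} [MeasurableSpace Ω] (P : Measure Ω) [IsProbabilityMeasure P]
    (a c : ℝ) (ha : 0 < a) (hc : 1 ≤ c)
    (Nca Na : Ω → ℕ) (hmca : Measurable Nca) (hma : Measurable Na)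
    (hpca : ∀ k : ℕ, (P {ω | Nca ω = k}).toReal =
      Real.exp (-(c * a)) * (c * a) ^ k / (k.factorial : ℝ))
    (hpa : ∀ k : ℕ, (P {ω | Na ω = k}).toReal =
      Real.exp (-a) * a ^ k / (k.factorial : ℝ)) :
    ∀ f : ℝ → ℝ, ConvexOn ℝ Set.univ f →
      Integrable (fun ω => f (Nca ω : ℝ)) P →
      Integrable (fun ω => f (c * (Na ω : ℝ))) P →
      ∫ ω, f (Nca ω : ℝ) ∂P ≤ ∫ ω, f (c * (Na ω : ℝ)) ∂P := by
  intro f hf hfca hfa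
  lift a to ℝ≥0 using ha.le
  lift c to ℝ≥0 using zero_le_one.trans hc
  have hNca : HasLaw Nca Po(c * a) P := hasLaw_poissonMeasure hmca (by simpa using hpca)
  have hNa : HasLaw Na Po(a) P := hasLaw_poissonMeasure hma hpa
  have hmeas {g : ℕ → ℝ} {μ : Measure ℕ} : AEStronglyMeasurable g μ := .of_discrete
  calc ∫ ω, f (Nca ω) ∂P = ∫ n, f n ∂Po(c * a) :=
        hNca.integral_comp (f := fun n : ℕ => f n) hmeas
    _ ≤ ∫ n, f (c * n) ∂Po(a) :=
      integral_poissonMeasure_le_integral_mul (by exact_mod_cast hc) a hf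
        ((hNca.integrable_comp_iff hmeas).mp hfca) ((hNa.integrable_comp_iff hmeas).mp hfa)
    _ = ∫ ω, f (c * Na ω) ∂P := (hNa.integral_comp (f := fun n : ℕ => f (c * n)) hmeas).symm
end

section
/- Let N_0, N_1, N_2, … be independent, identically distributed random variables with values in [0,∞]. For m ≥ 1 define Φ^m = Σ_{k=1}^m 1[N_k ≥ k] and Φ_0^m = Σ_{k=1}^m 1[N_0 ≥ k]. Then Φ^m ≤_cx Φ_0^m for every m: for every convex g : ℝ → ℝ, E[g(Σ_{k=1}^m 1[N_k ≥ k])] ≤ E[g(Σ_{k=1}^m 1[N_0 ≥ k])]. Moreover, if Σ_{k≥1} P(N_0 ≥ k) < ∞, then the almost surely finite infinite sums Φ = Σ_{k=1}^∞ 1[N_k ≥ k] and Φ_0 = Σ_{k=1}^∞ 1[N_0 ≥ k] satisfy Φ ≤_cx Φ_0. (Taking N_k Poisson, Φ is the counting function of the squared radii of the Ginibre point process and Φ_0 that of the corresponding Poisson process.) -/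
/-!
Write `X_m = Φ^m`, `Y_m = Φ_0^m` and `p = P(N_0 ≥ m + 1)`. Both grow by a Bernoulli(`p`)
increment: `X_{m+1} = X_m + 1[N_{m+1} ≥ m + 1]` with the increment independent of `X_m`, while
`Y_{m+1} = Y_m + 1[N_0 ≥ m + 1]` where the increment can only be `1` when `Y_m = m`. Hence
`E g(X_{m+1}) = (1 - p) E g(X_m) + p E g(X_m + 1)` and
`E g(Y_{m+1}) = E g(Y_m) + p (g(m+1) - g(m))`.
Induction, applied to `g` and to `g(· + 1)`, bounds the first by
`E g(Y_m) + p E[g(Y_m + 1) - g(Y_m)]`, and this is at most the second because `Y_m ≤ m` and the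
increments `g(y + 1) - g(y)` of a convex function grow with `y`.

If `Σ_k P(N_0 ≥ k) < ∞`, both infinite sums are integrable and almost surely finite. On `[0, T]` a
convex `g` is bounded by `|g 0| + |g T| + |g 0 - g (-1)| T`, so dominated convergence passes the
inequality to the limit.
-/

open MeasureTheory ENNReal

open scoped Classical

open ProbabilityTheory Filter Topology Set

namespace ConvexOn

variable {g : ℝ → ℝ}

lemma monotone_add_one_sub (hg : ConvexOn ℝ univ g) : Monotone fun x => g (x + 1) - g x := by
  intro x y hxy
  rcases hxy.eq_or_lt with rfl | hlt
  · rfl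
  have h₁ := hg.secant_mono (mem_univ x) (mem_univ (x + 1)) (mem_univ (y + 1))
    (by linarith) (by linarith) (by linarith)
  have h₂ := hg.secant_mono (mem_univ (y + 1)) (mem_univ x) (mem_univ y)
    (by linarith) (by linarith) hxy
  rw [add_sub_cancel_left, div_one] at h₁
  rw [show y - (y + 1) = -1 by ring, div_neg, div_one, neg_sub, ← neg_sub, ← neg_sub (y + 1),
    neg_div_neg_eq] at h₂
  dsimp only
  linarith

lemma abs_le_of_mem_Icc (hg : ConvexOn ℝ univ g) {t T : ℝ} (ht : t ∈ Icc 0 T) :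
    |g t| ≤ |g 0| + |g T| + |g 0 - g (-1)| * T := by
  have hT : 0 ≤ T := ht.1.trans ht.2
  have upper : g t ≤ max (g 0) (g T) := hg.le_on_segment (mem_univ 0) (mem_univ T)
    (by rwa [segment_eq_Icc hT])
  -- the chord through `-1` and `0` is a supporting line on `[0, ∞)`
  have lower : g 0 + (g 0 - g (-1)) * t ≤ g t := by
    rcases ht.1.eq_or_lt with rfl | htpos
    · simp
    have h := hg.secant_mono (mem_univ 0) (mem_univ (-1)) (mem_univ t)
      (by norm_num) htpos.ne' (by linarith)
    simp only [sub_zero, div_neg, div_one, neg_sub] at h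
    rw [le_div_iff₀ htpos] at h
    linarith
  have slope_bound : |(g 0 - g (-1)) * t| ≤ |g 0 - g (-1)| * T := by
    rw [abs_mul, abs_of_nonneg ht.1]
    exact mul_le_mul_of_nonneg_left ht.2 (abs_nonneg _)
  rw [abs_le]
  constructor
  · linarith [neg_abs_le (g 0), neg_abs_le ((g 0 - g (-1)) * t), abs_nonneg (g T)]
  · have hmax := max_le_add_of_nonneg (abs_nonneg (g 0)) (abs_nonneg (g T))
    linarith [max_le_max (le_abs_self (g 0)) (le_abs_self (g T)), abs_nonneg (g 0 - g (-1)),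
      mul_nonneg (abs_nonneg (g 0 - g (-1))) hT]

end ConvexOn

section Bernoulli

variable {Ω : Type*} [MeasurableSpace Ω] {μ : Measure Ω}

lemma Continuous.integrable_comp_of_mem_Icc [IsFiniteMeasure μ] {h : ℝ → ℝ} (hh : Continuous h)
    {X : Ω → ℝ} (hX : Measurable X) {a b : ℝ} (hXab : ∀ ω, X ω ∈ Icc a b) :
    Integrable (fun ω => h (X ω)) μ := by
  obtain ⟨C, hC⟩ := isCompact_Icc.exists_bound_of_continuousOn hh.continuousOn
  exact .of_bound (hh.measurable.comp hX).aestronglyMeasurable C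
    (ae_of_all _ fun ω => hC _ (hXab ω))

lemma integral_comp_add_of_indepFun {X B : Ω → ℝ} (hXB : IndepFun X B μ) (hB : Measurable B)
    (hB01 : ∀ ω, B ω = 0 ∨ B ω = 1) {h : ℝ → ℝ} (hh : Measurable h)
    (hi₀ : Integrable (fun ω => h (X ω)) μ) (hi₁ : Integrable (fun ω => h (X ω + 1)) μ) :
    ∫ ω, h (X ω + B ω) ∂μ =
      ∫ ω, h (X ω) ∂μ + (∫ ω, B ω ∂μ) * (∫ ω, h (X ω + 1) ∂μ - ∫ ω, h (X ω) ∂μ) := by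
  have hpt : ∀ ω, h (X ω + B ω) = h (X ω) + B ω * (h (X ω + 1) - h (X ω)) := fun ω => by
    rcases hB01 ω with hω | hω <;> simp [hω]
  have hind : IndepFun B (fun ω => h (X ω + 1) - h (X ω)) μ :=
    hXB.symm.comp measurable_id ((hh.comp (measurable_id.add_const 1)).sub hh)
  have hiB : Integrable (fun ω => B ω * (h (X ω + 1) - h (X ω))) μ :=
    (hi₁.sub hi₀).bdd_mul hB.aestronglyMeasurable (c := 1)
      (ae_of_all _ fun ω => by rcases hB01 ω with hω | hω <;> simp [hω])
  simp_rw [hpt]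
  rw [integral_add hi₀ hiB, hind.integral_fun_mul_eq_mul_integral hB.aestronglyMeasurable
    (hi₁.sub hi₀).aestronglyMeasurable, integral_sub hi₁ hi₀]

lemma integral_comp_add_of_eq_one_imp {Y C : Ω → ℝ} {b : ℝ} (hC01 : ∀ ω, C ω = 0 ∨ C ω = 1)
    (hCY : ∀ ω, C ω = 1 → Y ω = b) {h : ℝ → ℝ} (hi : Integrable (fun ω => h (Y ω)) μ)
    (hiC : Integrable C μ) :
    ∫ ω, h (Y ω + C ω) ∂μ = ∫ ω, h (Y ω) ∂μ + (∫ ω, C ω ∂μ) * (h (b + 1) - h b) := by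
  have hpt : ∀ ω, h (Y ω + C ω) = h (Y ω) + C ω * (h (b + 1) - h b) := fun ω => by
    rcases hC01 ω with hω | hω
    · simp [hω]
    · simp [hω, hCY ω hω]
  simp_rw [hpt]
  rw [integral_add hi (hiC.mul_const _), integral_mul_const]

theorem integral_convex_add_le_of_indepFun [IsProbabilityMeasure μ] {X Y B C : Ω → ℝ} {a b : ℝ}
    (hX : Measurable X) (hY : Measurable Y) (hXab : ∀ ω, X ω ∈ Icc a b)
    (hYab : ∀ ω, Y ω ∈ Icc a b) (hB : Measurable B) (hC : Measurable C)
    (hB01 : ∀ ω, B ω = 0 ∨ B ω = 1) (hC01 : ∀ ω, C ω = 0 ∨ C ω = 1)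
    (hXB : IndepFun X B μ) (hCY : ∀ ω, C ω = 1 → Y ω = b)
    (hBC : ∫ ω, B ω ∂μ = ∫ ω, C ω ∂μ)
    (hXY : ∀ g : ℝ → ℝ, ConvexOn ℝ univ g → ∫ ω, g (X ω) ∂μ ≤ ∫ ω, g (Y ω) ∂μ)
    {g : ℝ → ℝ} (hg : ConvexOn ℝ univ g) :
    ∫ ω, g (X ω + B ω) ∂μ ≤ ∫ ω, g (Y ω + C ω) ∂μ := by
  have hgc : Continuous g := continuousOn_univ.mp (hg.continuousOn isOpen_univ)
  have hg₁ : Continuous fun x => g (x + 1) := hgc.comp (continuous_add_const 1)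
  have hi : ∀ {Z : Ω → ℝ}, Measurable Z → (∀ ω, Z ω ∈ Icc a b) →
      Integrable (fun ω => g (Z ω)) μ ∧ Integrable (fun ω => g (Z ω + 1)) μ := fun hZ hZab =>
    ⟨hgc.integrable_comp_of_mem_Icc hZ hZab, hg₁.integrable_comp_of_mem_Icc hZ hZab⟩
  have hC_mem : ∀ ω, C ω ∈ Icc (0 : ℝ) 1 := fun ω => by rcases hC01 ω with h | h <;> simp [h]
  have hp : ∫ ω, C ω ∂μ ∈ Icc (0 : ℝ) 1 := by
    refine ⟨integral_nonneg fun ω => (hC_mem ω).1, ?_⟩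
    calc ∫ ω, C ω ∂μ ≤ ∫ _, (1 : ℝ) ∂μ :=
          integral_mono (continuous_id.integrable_comp_of_mem_Icc hC hC_mem) (integrable_const _)
            fun ω => (hC_mem ω).2
      _ = 1 := by simp
  set p := ∫ ω, C ω ∂μ
  have increments : ∫ ω, g (Y ω + 1) ∂μ - ∫ ω, g (Y ω) ∂μ ≤ g (b + 1) - g b := by
    rw [← integral_sub (hi hY hYab).2 (hi hY hYab).1]
    calc ∫ ω, g (Y ω + 1) - g (Y ω) ∂μ ≤ ∫ _, g (b + 1) - g b ∂μ :=
          integral_mono ((hi hY hYab).2.sub (hi hY hYab).1) (integrable_const _)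
            fun ω => hg.monotone_add_one_sub (hYab ω).2
      _ = g (b + 1) - g b := by simp
  calc ∫ ω, g (X ω + B ω) ∂μ
      = (1 - p) * ∫ ω, g (X ω) ∂μ + p * ∫ ω, g (X ω + 1) ∂μ := by
        rw [integral_comp_add_of_indepFun hXB hB hB01 hgc.measurable (hi hX hXab).1
          (hi hX hXab).2, hBC]
        ring
    _ ≤ (1 - p) * ∫ ω, g (Y ω) ∂μ + p * ∫ ω, g (Y ω + 1) ∂μ := by
        have hg₁' : ConvexOn ℝ univ fun x => g (x + 1) := by
          have h := hg.translate_left 1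
          rwa [preimage_univ] at h
        exact add_le_add (mul_le_mul_of_nonneg_left (hXY g hg) (by linarith [hp.2]))
          (mul_le_mul_of_nonneg_left (hXY _ hg₁') hp.1)
    _ ≤ ∫ ω, g (Y ω) ∂μ + p * (g (b + 1) - g b) := by nlinarith [hp.1]
    _ = ∫ ω, g (Y ω + C ω) ∂μ :=
        (integral_comp_add_of_eq_one_imp hC01 hCY (hi hY hYab).1
          (continuous_id.integrable_comp_of_mem_Icc hC hC_mem)).symm

end Bernoulli

section LevelCount

variable {Ω : Type*}

noncomputable def levelIndicator (M : ℕ → Ω → ℝ≥0∞) (k : ℕ) (ω : Ω) : ℝ :=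
  if (k : ℝ≥0∞) ≤ M k ω then 1 else 0

/-- `Φ^m = levelCount N m` and `Φ_0^m = levelCount (fun _ => N 0) m`. -/
noncomputable def levelCount (M : ℕ → Ω → ℝ≥0∞) (m : ℕ) (ω : Ω) : ℝ :=
  ∑ k ∈ Finset.Icc 1 m, levelIndicator M k ω

variable {M : ℕ → Ω → ℝ≥0∞}

lemma levelIndicator_eq_zero_or_one (k : ℕ) (ω : Ω) :
    levelIndicator M k ω = 0 ∨ levelIndicator M k ω = 1 := by
  unfold levelIndicator; split_ifs <;> simp

lemma levelIndicator_eq_indicator (k : ℕ) :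
    levelIndicator M k = {ω | (k : ℝ≥0∞) ≤ M k ω}.indicator 1 := by
  ext ω; simp [levelIndicator, indicator_apply]

lemma measurable_levelIndicator [MeasurableSpace Ω] {k : ℕ} (hM : Measurable (M k)) :
    Measurable (levelIndicator M k) :=
  Measurable.ite (measurableSet_le measurable_const hM) measurable_const measurable_const

lemma measurable_levelCount [MeasurableSpace Ω] (hM : ∀ k, Measurable (M k)) (m : ℕ) :
    Measurable (levelCount M m) :=
  Finset.measurable_fun_sum _ fun k _ => measurable_levelIndicator (hM k)

lemma levelCount_mem_Icc (m : ℕ) (ω : Ω) : levelCount M m ω ∈ Icc (0 : ℝ) m := by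
  have h01 : ∀ k, levelIndicator M k ω ∈ Icc (0 : ℝ) 1 := fun k => by
    rcases levelIndicator_eq_zero_or_one (M := M) k ω with h | h <;> simp [h]
  unfold levelCount
  constructor
  · exact Finset.sum_nonneg fun k _ => (h01 k).1
  · simpa using Finset.sum_le_sum fun k (_ : k ∈ Finset.Icc 1 m) => (h01 k).2

lemma levelCount_succ (m : ℕ) (ω : Ω) :
    levelCount M (m + 1) ω = levelCount M m ω + levelIndicator M (m + 1) ω :=
  Finset.sum_Icc_succ_top (by omega) _

lemma sum_range_levelIndicator_succ (m : ℕ) (ω : Ω) :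
    ∑ k ∈ Finset.range m, levelIndicator M (k + 1) ω = levelCount M m ω := by
  induction m with
  | zero => simp [levelCount]
  | succ m ih => rw [Finset.sum_range_succ, ih, levelCount_succ]

lemma levelCount_const_of_levelIndicator_eq_one {Z : Ω → ℝ≥0∞} {m : ℕ} {ω : Ω}
    (h : levelIndicator (fun _ => Z) (m + 1) ω = 1) : levelCount (fun _ => Z) m ω = m := by
  have hle : ((m + 1 : ℕ) : ℝ≥0∞) ≤ Z ω := by
    by_contra hlt
    rw [levelIndicator, if_neg hlt] at h
    exact zero_ne_one h
  have hall : ∀ k ∈ Finset.Icc 1 m, levelIndicator (fun _ => Z) k ω = 1 := fun k hk =>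
    if_pos <| le_trans (by exact_mod_cast (Finset.mem_Icc.mp hk).2.trans m.le_succ) hle
  simp [levelCount, Finset.sum_congr rfl hall]

lemma indepFun_levelCount_levelIndicator [MeasurableSpace Ω] {P : Measure Ω}
    (hM : ∀ k, Measurable (M k)) (hindep : iIndepFun M P) (m : ℕ) :
    IndepFun (levelCount M m) (levelIndicator M (m + 1)) P := by
  have hind : iIndepFun (levelIndicator M) P :=
    hindep.comp (fun k x => if (k : ℝ≥0∞) ≤ x then (1 : ℝ) else 0) fun k =>
      Measurable.ite (measurableSet_le measurable_const measurable_id) measurable_const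
        measurable_const
  have hsum : levelCount M m = ∑ k ∈ Finset.Icc 1 m, levelIndicator M k := by
    ext ω; simp [levelCount]
  rw [hsum]
  exact hind.indepFun_finsetSum_of_notMem (fun k => measurable_levelIndicator (hM k)) (by simp)

theorem integral_convex_levelCount_le [MeasurableSpace Ω] {P : Measure Ω}
    [IsProbabilityMeasure P] {N : ℕ → Ω → ℝ≥0∞} (hN : ∀ k, Measurable (N k))
    (hindep : iIndepFun N P) (hident : ∀ k, IdentDistrib (N k) (N 0) P P) (m : ℕ)
    {g : ℝ → ℝ} (hg : ConvexOn ℝ univ g) :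
    ∫ ω, g (levelCount N m ω) ∂P ≤ ∫ ω, g (levelCount (fun _ => N 0) m ω) ∂P := by
  induction m generalizing g with
  | zero => simp [levelCount]
  | succ m ih =>
    have hsame : ∫ ω, levelIndicator N (m + 1) ω ∂P =
        ∫ ω, levelIndicator (fun _ => N 0) (m + 1) ω ∂P :=
      ((hident (m + 1)).comp
        (measurable_levelIndicator (M := fun _ => id) (k := m + 1) measurable_id)).integral_eq
    simp only [levelCount_succ]
    exact integral_convex_add_le_of_indepFun (measurable_levelCount hN m)
      (measurable_levelCount (fun _ => hN 0) m) (levelCount_mem_Icc m) (levelCount_mem_Icc m)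
      (measurable_levelIndicator (hN _)) (measurable_levelIndicator (M := fun _ => N 0) (hN 0))
      (levelIndicator_eq_zero_or_one _) (levelIndicator_eq_zero_or_one (M := fun _ => N 0) _)
      (indepFun_levelCount_levelIndicator hN hindep m)
      (fun _ => levelCount_const_of_levelIndicator_eq_one) hsame (fun _ => ih) hg

end LevelCount

section Tail

variable {Ω : Type*} {A : ℕ → Set Ω}

lemma toReal_tsum_indicator_one (ω : Ω) :
    (∑' k, (A k).indicator (1 : Ω → ℝ≥0∞) ω).toReal = ∑' k, (A k).indicator (1 : Ω → ℝ) ω := by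
  rw [ENNReal.tsum_toReal_eq fun k => by by_cases h : ω ∈ A k <;> simp [h]]
  congr with k
  by_cases h : ω ∈ A k <;> simp [h]

variable [MeasurableSpace Ω] {μ : Measure Ω}

lemma lintegral_tsum_indicator_one (hA : ∀ k, MeasurableSet (A k)) :
    ∫⁻ ω, ∑' k, (A k).indicator 1 ω ∂μ = ∑' k, μ (A k) := by
  rw [lintegral_tsum fun k => (measurable_one.indicator (hA k)).aemeasurable]
  exact tsum_congr fun k => lintegral_indicator_one (hA k)

lemma ae_summable_indicator_one (hA : ∀ k, MeasurableSet (A k)) (hsum : ∑' k, μ (A k) ≠ ∞) :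
    ∀ᵐ ω ∂μ, Summable fun k => (A k).indicator (1 : Ω → ℝ) ω := by
  have hfin := ae_lt_top (Measurable.tsum fun k => measurable_one.indicator (hA k))
    ((lintegral_tsum_indicator_one hA).trans_ne hsum)
  filter_upwards [hfin] with ω hω
  convert ENNReal.summable_toReal hω.ne with k
  by_cases h : ω ∈ A k <;> simp [h]

lemma integrable_tsum_indicator_one (hA : ∀ k, MeasurableSet (A k))
    (hsum : ∑' k, μ (A k) ≠ ∞) :
    Integrable (fun ω => ∑' k, (A k).indicator (1 : Ω → ℝ) ω) μ := by
  simp_rw [← toReal_tsum_indicator_one]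
  exact integrable_toReal_of_lintegral_ne_top
    (Measurable.tsum fun k => measurable_one.indicator (hA k)).aemeasurable
    ((lintegral_tsum_indicator_one hA).trans_ne hsum)

theorem tendsto_integral_convex_sum_range [IsFiniteMeasure μ] {a : ℕ → Ω → ℝ}
    (ha : ∀ k, Measurable (a k)) (ha₀ : ∀ k ω, 0 ≤ a k ω) (hs : ∀ᵐ ω ∂μ, Summable (a · ω))
    (hi : Integrable (fun ω => ∑' k, a k ω) μ) {g : ℝ → ℝ} (hg : ConvexOn ℝ univ g)
    (hgi : Integrable (fun ω => g (∑' k, a k ω)) μ) :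
    Tendsto (fun m => ∫ ω, g (∑ k ∈ Finset.range m, a k ω) ∂μ) atTop
      (𝓝 (∫ ω, g (∑' k, a k ω) ∂μ)) := by
  have hgc : Continuous g := continuousOn_univ.mp (hg.continuousOn isOpen_univ)
  refine tendsto_integral_of_dominated_convergence
    (fun ω => |g 0| + |g (∑' k, a k ω)| + |g 0 - g (-1)| * ∑' k, a k ω)
    (fun m =>
      (hgc.measurable.comp (Finset.measurable_sum _ fun k _ => ha k)).aestronglyMeasurable)
    (((integrable_const _).add hgi.abs).add (hi.const_mul _)) (fun m => ?_) ?_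
  · filter_upwards [hs] with ω hω
    exact hg.abs_le_of_mem_Icc ⟨Finset.sum_nonneg fun k _ => ha₀ k ω,
      hω.sum_le_tsum _ fun k _ => ha₀ k ω⟩
  · filter_upwards [hs] with ω hω
    exact (hgc.tendsto _).comp hω.hasSum.tendsto_sum_nat

lemma tendsto_integral_convex_levelCount [IsFiniteMeasure μ] {M : ℕ → Ω → ℝ≥0∞}
    (hM : ∀ k, Measurable (M k))
    (hsum : ∑' k : ℕ, μ {ω | ((k + 1 : ℕ) : ℝ≥0∞) ≤ M (k + 1) ω} ≠ ∞)
    {g : ℝ → ℝ} (hg : ConvexOn ℝ univ g)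
    (hgi : Integrable (fun ω => g (∑' k, levelIndicator M (k + 1) ω)) μ) :
    Tendsto (fun m => ∫ ω, g (levelCount M m ω) ∂μ) atTop
      (𝓝 (∫ ω, g (∑' k, levelIndicator M (k + 1) ω) ∂μ)) := by
  have hA : ∀ k, MeasurableSet {ω | ((k + 1 : ℕ) : ℝ≥0∞) ≤ M (k + 1) ω} := fun k =>
    measurableSet_le measurable_const (hM (k + 1))
  simp_rw [← sum_range_levelIndicator_succ, levelIndicator_eq_indicator] at hgi ⊢
  exact tendsto_integral_convex_sum_range (fun k => measurable_one.indicator (hA k))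
    (fun k ω => indicator_nonneg (fun _ _ => zero_le_one) ω) (ae_summable_indicator_one hA hsum)
    (integrable_tsum_indicator_one hA hsum) hg hgi

end Tail

/-- For i.i.d. `[0,∞]`-valued random variables `N_0, N_1, N_2, …`, the sums
`Φ^m = Σ_{k=1}^m 1[N_k ≥ k]` and `Φ_0^m = Σ_{k=1}^m 1[N_0 ≥ k]` satisfy `Φ^m ≤_cx Φ_0^m`;
moreover, if `Σ_k P(N_0 ≥ k) < ∞`, the a.s. finite infinite sums `Φ = Σ_{k≥1} 1[N_k ≥ k]`
and `Φ_0 = Σ_{k≥1} 1[N_0 ≥ k]` satisfy `Φ ≤_cx Φ_0`. -/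
theorem ginibre_radii_convex_order
    {Ω : Type*} [MeasurableSpace Ω] (P : Measure Ω) [IsProbabilityMeasure P]
    (N : ℕ → Ω → ℝ≥0∞) (hmeas : ∀ k, Measurable (N k))
    (hindep : ProbabilityTheory.iIndepFun N P)
    (hident : ∀ k, P.map (N k) = P.map (N 0)) :
    (∀ m : ℕ, ∀ g : ℝ → ℝ, ConvexOn ℝ Set.univ g →
      Integrable (fun ω => g (∑ k ∈ Finset.Icc 1 m,
        if (k : ℝ≥0∞) ≤ N k ω then (1 : ℝ) else 0)) P →
      Integrable (fun ω => g (∑ k ∈ Finset.Icc 1 m,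
        if (k : ℝ≥0∞) ≤ N 0 ω then (1 : ℝ) else 0)) P →
      ∫ ω, g (∑ k ∈ Finset.Icc 1 m, if (k : ℝ≥0∞) ≤ N k ω then (1 : ℝ) else 0) ∂P ≤
        ∫ ω, g (∑ k ∈ Finset.Icc 1 m, if (k : ℝ≥0∞) ≤ N 0 ω then (1 : ℝ) else 0) ∂P) ∧
    ((∑' k : ℕ, P {ω | ((k + 1 : ℕ) : ℝ≥0∞) ≤ N 0 ω}) < ⊤ →
      ∀ g : ℝ → ℝ, ConvexOn ℝ Set.univ g →
        Integrable (fun ω => g (∑' k : ℕ,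
          if ((k + 1 : ℕ) : ℝ≥0∞) ≤ N (k + 1) ω then (1 : ℝ) else 0)) P →
        Integrable (fun ω => g (∑' k : ℕ,
          if ((k + 1 : ℕ) : ℝ≥0∞) ≤ N 0 ω then (1 : ℝ) else 0)) P →
        ∫ ω, g (∑' k : ℕ, if ((k + 1 : ℕ) : ℝ≥0∞) ≤ N (k + 1) ω then (1 : ℝ) else 0) ∂P ≤
          ∫ ω, g (∑' k : ℕ, if ((k + 1 : ℕ) : ℝ≥0∞) ≤ N 0 ω then (1 : ℝ) else 0) ∂P) := by
  have hid : ∀ k, IdentDistrib (N k) (N 0) P P := fun k =>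
    ⟨(hmeas k).aemeasurable, (hmeas 0).aemeasurable, hident k⟩
  have finite := fun m g (hg : ConvexOn ℝ univ g) =>
    integral_convex_levelCount_le hmeas hindep hid m hg
  refine ⟨fun m g hg _ _ => finite m g hg, fun hsum g hg hi hi₀ => ?_⟩
  have hsum' : ∑' k : ℕ, P {ω | ((k + 1 : ℕ) : ℝ≥0∞) ≤ N (k + 1) ω} ≠ ∞ :=
    (tsum_congr fun k => (hid (k + 1)).measure_mem_eq measurableSet_Ici).trans_ne hsum.ne
  exact le_of_tendsto_of_tendsto'
    (tendsto_integral_convex_levelCount hmeas hsum' hg hi)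
    (tendsto_integral_convex_levelCount (M := fun _ => N 0) (fun _ => hmeas 0) hsum.ne hg hi₀)
    (fun m => finite m g hg)
end
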